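/- arXiv:2602.20894 — 6 statements merged into one kernel-verified Lean document; each statement's English description precedes it below -/
import Mathlib

section
/- Every vector ω ∈ ℝ^n satisfying ∑_{j=1}^n ω_j P_m(x_j) x_j^k = 0 for k = 0,…,m−1 is a real linear combination of the circuit vectors ω^{(J)} over all subsets J ⊆ {1,…,n} with |J| = m+1; that is, the solution space of the Vandermonde-type system is spanned by { ω^{(J)} : J ⊆ {1,…,n}, |J| = m+1 }. -/
open Finset Polynomial
open Finset Polynomial


lemma lag_lc {ι : Type*} [DecidableEq ι] (s : Finset ι) (v : ι → ℝ) (i : ι) :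
    (Lagrange.basis s v i).leadingCoeff = ∏ j ∈ s.erase i, (v i - v j)⁻¹ := by
  rw [Lagrange.basis, leadingCoeff_prod]
  refine Finset.prod_congr rfl fun j _ => ?_
  rw [Lagrange.basisDivisor, leadingCoeff_mul, leadingCoeff_C,
    (monic_X_sub_C (v j)).leadingCoeff, mul_one]

lemma key_ident {ι : Type*} [DecidableEq ι] {J : Finset ι} {v : ι → ℝ}
    (hv : Set.InjOn v J) {k : ℕ} (hk : k + 1 < J.card) :
    ∑ j ∈ J, v j ^ k * (∏ j' ∈ J.erase j, (v j - v j'))⁻¹ = 0 := by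
  have hdeg : (Polynomial.X ^ k : ℝ[X]).degree < J.card := by
    rw [degree_X_pow]
    exact_mod_cast Nat.lt_of_succ_lt hk
  have hX : (Polynomial.X ^ k : ℝ[X]) = Lagrange.interpolate J v (fun i => v i ^ k) :=
    Lagrange.eq_interpolate_of_eval_eq (r := fun i => v i ^ k) hv hdeg (fun i _ => by simp)
  have hc := congrArg (fun p : ℝ[X] => p.coeff (J.card - 1)) hX
  simp only [Lagrange.interpolate_apply, finset_sum_coeff, coeff_C_mul, coeff_X_pow] at hc
  rw [if_neg (by omega)] at hc
  have hb : ∀ j ∈ J, (Lagrange.basis J v j).coeff (J.card - 1)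
      = ∏ j' ∈ J.erase j, (v j - v j')⁻¹ := fun j hj => by
    rw [← Lagrange.natDegree_basis hv hj, coeff_natDegree, lag_lc]
  calc ∑ j ∈ J, v j ^ k * (∏ j' ∈ J.erase j, (v j - v j'))⁻¹
      = ∑ j ∈ J, v j ^ k * (Lagrange.basis J v j).coeff (J.card - 1) := by
        refine Finset.sum_congr rfl fun j hj => ?_
        rw [hb j hj, Finset.prod_inv_distrib]
    _ = 0 := hc.symm


lemma circuits_solve {n : ℕ} (V P : Fin n → ℝ) (hVinj : Function.Injective V)
    (hP : ∀ j, P j ≠ 0) (J : Finset (Fin n)) (m k : ℕ) (hJ : J.card = m + 1) (hk : k < m)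
    (w : Fin n → ℝ)
    (hw : ∀ j, w j = if j ∈ J then
      1 / (P j * ∏ j' ∈ J.erase j, (V j - V j')) else 0) :
    ∑ j : Fin n, w j * P j * V j ^ k = 0 := by
  classical
  have hQ : ∀ j ∈ J, (∏ j' ∈ J.erase j, (V j - V j')) ≠ 0 := by
    intro j hj
    refine Finset.prod_ne_zero_iff.mpr fun j' hj' => sub_ne_zero.mpr fun h => ?_
    exact (Finset.mem_erase.mp hj').1 (hVinj h).symm
  rw [← Finset.sum_subset J.subset_univ (fun j _ hj => by rw [hw j, if_neg hj]; ring)]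
  have hterm : ∀ j ∈ J, w j * P j * V j ^ k
      = V j ^ k * (∏ j' ∈ J.erase j, (V j - V j'))⁻¹ := by
    intro j hj
    rw [hw j, if_pos hj]
    rw [div_mul_eq_mul_div, div_mul_eq_mul_div, one_mul, eq_comm, mul_inv_eq_iff_eq_mul₀ (hQ j hj),
      div_mul_eq_mul_div, mul_comm (P j), mul_assoc, mul_div_assoc, div_self (by exact mul_ne_zero (hP j) (hQ j hj)), mul_one]
  rw [Finset.sum_congr rfl hterm]
  exact key_ident hVinj.injOn (by omega)


lemma support_small_zero {n m : ℕ} (V P : Fin n → ℝ) (hVinj : Function.Injective V)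
    (hP : ∀ j, P j ≠ 0) (B : Finset (Fin n)) (hB : B.card = m)
    (w : Fin n → ℝ) (hsupp : ∀ j ∉ B, w j = 0)
    (heq : ∀ k < m, ∑ j : Fin n, w j * P j * V j ^ k = 0) : w = 0 := by
  classical
  have hBsum : ∀ k < m, ∑ j ∈ B, (w j * P j) * V j ^ k = 0 := by
    intro k hk
    rw [Finset.sum_subset B.subset_univ (fun j _ hj => by rw [hsupp j hj]; ring)]
    exact heq k hk
  set e := B.orderIsoOfFin hB with he
  set g : Fin m → Fin n := fun i => (e i : Fin n) with hg
  have hginj : Function.Injective g := fun a b h =>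
    e.injective (Subtype.ext h)
  have hsum : ∀ f : Fin n → ℝ, ∑ j ∈ B, f j = ∑ i : Fin m, f (g i) := by
    intro f
    rw [← Finset.sum_attach B f]
    exact (Fintype.sum_equiv e.toEquiv _ _ (fun i => rfl)).symm
  have hzero : (fun i => w (g i) * P (g i)) = 0 := by
    apply Matrix.eq_zero_of_forall_pow_sum_mul_pow_eq_zero (f := V ∘ g) (hVinj.comp hginj)
    intro i
    have := hBsum (i : ℕ) i.isLt
    rw [hsum] at this
    simpa using this
  funext j
  by_cases hj : j ∈ B
  · have : g (e.symm ⟨j, hj⟩) = j := by simp [hg]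
    have h2 := congrFun hzero (e.symm ⟨j, hj⟩)
    rw [this] at h2
    simp only [Pi.zero_apply] at h2 ⊢
    exact (mul_eq_zero.mp h2).resolve_right (hP j)
  · exact hsupp j hj



/-- `Pm m y` is the monic polynomial `P_m(t) = ∏_{k=1}^m (t - y_k)` (1-based indexing). -/
noncomputable def Pm (m : ℕ) (y : ℕ → ℝ) (t : ℝ) : ℝ := ∏ k ∈ Finset.Icc 1 m, (t - y k)

/-- The circuit vector `ω^{(J)} ∈ ℝⁿ` associated with a subset `J ⊆ {1,…,n}`:
`ω^{(J)}_j = 1/(P_m(x_j) · Q_J'(x_j))` for `j ∈ J`, and `0` otherwise. -/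
noncomputable def circuitR (n m : ℕ) (x y : ℕ → ℝ) (J : Finset (Fin n)) : Fin n → ℝ :=
  fun j => if j ∈ J then
    1 / (Pm m y (x ((j : ℕ) + 1)) *
      ∏ j' ∈ J.erase j, (x ((j : ℕ) + 1) - x ((j' : ℕ) + 1)))
  else 0

/-- the solution space of the Vandermonde-type system
`∑_j ω_j P_m(x_j) x_j^k = 0` (`k = 0,…,m-1`) is exactly the real span of the circuit
vectors `ω^{(J)}` over all subsets `J ⊆ {1,…,n}` with `|J| = m+1`. -/
theorem stmt_3 (m n : ℕ) (hm : 1 ≤ m) (hmn : m < n)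
    (x y : ℕ → ℝ)
    (hx : ∀ j j', 1 ≤ j → j < j' → j' ≤ n → x j < x j')
    (hy : ∀ k k', 1 ≤ k → k < k' → k' ≤ m → y k < y k')
    (hxy : ∀ j k, 1 ≤ j → j ≤ n → 1 ≤ k → k ≤ m → x j ≠ y k) :
    {ω : Fin n → ℝ | ∀ k, k < m →
        ∑ j : Fin n, ω j * Pm m y (x ((j : ℕ) + 1)) * x ((j : ℕ) + 1) ^ k = 0}
      = ↑(Submodule.span ℝ
          {w : Fin n → ℝ | ∃ J : Finset (Fin n), J.card = m + 1 ∧ w = circuitR n m x y J}) := by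
  classical
  set V : Fin n → ℝ := fun j => x ((j : ℕ) + 1) with hVdef
  set P : Fin n → ℝ := fun j => Pm m y (V j) with hPdef
  have hVmono : StrictMono V := fun a b h =>
    hx _ _ (Nat.le_add_left 1 _) (Nat.succ_lt_succ h) b.isLt
  have hVinj : Function.Injective V := hVmono.injective
  have hPne : ∀ j, P j ≠ 0 := by
    intro j
    rw [hPdef]
    refine Finset.prod_ne_zero_iff.mpr fun k hk => sub_ne_zero.mpr ?_
    obtain ⟨hk1, hk2⟩ := Finset.mem_Icc.mp hk
    exact hxy _ k (Nat.le_add_left 1 _) j.isLt hk1 hk2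
  have hcw : ∀ J : Finset (Fin n), ∀ j, circuitR n m x y J j
      = if j ∈ J then 1 / (P j * ∏ j' ∈ J.erase j, (V j - V j')) else 0 := fun J j => rfl
  have hcirc : ∀ J : Finset (Fin n), J.card = m + 1 → ∀ k < m,
      ∑ j : Fin n, circuitR n m x y J j * P j * V j ^ k = 0 := fun J hJ k hk =>
    circuits_solve V P hVinj hPne J m k hJ hk _ (hcw J)
  ext ω
  simp only [Set.mem_setOf_eq, SetLike.mem_coe]
  constructor
  · intro hω
    -- hard direction: construct the decomposition
    set B : Finset (Fin n) := Finset.univ.map (Fin.castLEEmb hmn.le) with hBdef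
    have hBmem : ∀ j : Fin n, j ∈ B ↔ (j : ℕ) < m := by
      intro j
      constructor
      · rintro hj
        obtain ⟨i, -, rfl⟩ := Finset.mem_map.mp hj
        exact i.isLt
      · intro hj
        exact Finset.mem_map.mpr ⟨⟨(j : ℕ), hj⟩, Finset.mem_univ _, Fin.ext rfl⟩
    have hBcard : B.card = m := by simp [hBdef]
    set c : Fin n → ℝ := fun i => ω i * (P i * ∏ j' ∈ B, (V i - V j')) with hcdef
    set F : Fin n → ℝ := ∑ i ∈ Bᶜ, c i • circuitR n m x y (insert i B) with hFdef
    have hJcard : ∀ i ∈ Bᶜ, (insert i B).card = m + 1 := by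
      intro i hi
      rw [Finset.card_insert_of_notMem (Finset.mem_compl.mp hi), hBcard]
    have hFspan : F ∈ Submodule.span ℝ
        {w : Fin n → ℝ | ∃ J : Finset (Fin n), J.card = m + 1 ∧ w = circuitR n m x y J} := by
      refine Submodule.sum_mem _ fun i hi => Submodule.smul_mem _ _ (Submodule.subset_span ?_)
      exact ⟨insert i B, hJcard i hi, rfl⟩
    have hFapp : ∀ j, F j = ∑ i ∈ Bᶜ, c i * circuitR n m x y (insert i B) j := by
      intro j
      rw [hFdef, Finset.sum_apply]
      rfl
    have hQBne : ∀ i ∉ B, (∏ j' ∈ B, (V i - V j')) ≠ 0 := by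
      intro i hi
      refine Finset.prod_ne_zero_iff.mpr fun j' hj' => sub_ne_zero.mpr fun h => ?_
      exact hi (hVinj h ▸ hj')
    have hsupp : ∀ j ∉ B, ω j - F j = 0 := by
      intro j hj
      rw [hFapp]
      have hjc : j ∈ Bᶜ := Finset.mem_compl.mpr hj
      rw [Finset.sum_eq_single j
        (fun i hi hne => by
          have hjni : j ∉ insert i B := by
            simp only [Finset.mem_insert]
            rintro (rfl | h)
            · exact hne rfl
            · exact hj h
          rw [hcw, if_neg hjni, mul_zero])
        (fun h => absurd hjc h)]
      rw [hcw, if_pos (Finset.mem_insert_self j B), Finset.erase_insert hj, hcdef]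
      have hPQ : P j * ∏ j' ∈ B, (V j - V j') ≠ 0 := mul_ne_zero (hPne j) (hQBne j hj)
      field_simp
      rw [div_self hPQ, sub_self, mul_zero]
    have hdiffeq : ∀ k < m, ∑ j : Fin n, (ω j - F j) * P j * V j ^ k = 0 := by
      intro k hk
      have hFsolve : ∑ j : Fin n, F j * P j * V j ^ k = 0 := by
        calc ∑ j : Fin n, F j * P j * V j ^ k
            = ∑ j : Fin n, ∑ i ∈ Bᶜ, c i * (circuitR n m x y (insert i B) j * P j * V j ^ k) := by
              refine Finset.sum_congr rfl fun j _ => ?_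
              rw [hFapp, Finset.sum_mul, Finset.sum_mul]
              exact Finset.sum_congr rfl fun i _ => by ring
          _ = ∑ i ∈ Bᶜ, ∑ j : Fin n, c i * (circuitR n m x y (insert i B) j * P j * V j ^ k) :=
              Finset.sum_comm
          _ = 0 := by
              refine Finset.sum_eq_zero fun i _hi => ?_
              rw [← Finset.mul_sum, hcirc _ (hJcard i _hi) k hk, mul_zero]
      calc ∑ j : Fin n, (ω j - F j) * P j * V j ^ k
          = (∑ j : Fin n, ω j * P j * V j ^ k) - ∑ j : Fin n, F j * P j * V j ^ k := by
            rw [← Finset.sum_sub_distrib]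
            exact Finset.sum_congr rfl fun j _ => by ring
        _ = 0 := by
            have hω' : ∑ j : Fin n, ω j * P j * V j ^ k = 0 := hω k hk
            rw [hω', hFsolve, sub_zero]
    have hzero : (fun j => ω j - F j) = 0 :=
      support_small_zero V P hVinj hPne B hBcard _ hsupp hdiffeq
    have : ω = F := by
      funext j
      have := congrFun hzero j
      simp only [Pi.zero_apply] at this
      linarith
    rw [this]
    exact hFspan
  · intro hω k hk
    induction hω using Submodule.span_induction with
    | mem w hw =>
      obtain ⟨J, hJ, rfl⟩ := hw
      exact hcirc J hJ k hk
    | zero => simp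
    | add a b ha hb iha ihb =>
      calc ∑ j : Fin n, (a + b) j * P j * V j ^ k
          = (∑ j : Fin n, a j * P j * V j ^ k) + ∑ j : Fin n, b j * P j * V j ^ k := by
            rw [← Finset.sum_add_distrib]
            exact Finset.sum_congr rfl fun j _ => by simp; ring
        _ = 0 := by rw [iha, ihb, add_zero]
    | smul r a ha iha =>
      calc ∑ j : Fin n, (r • a) j * P j * V j ^ k
          = r * ∑ j : Fin n, a j * P j * V j ^ k := by
            rw [Finset.mul_sum]
            exact Finset.sum_congr rfl fun j _ => by simp; ring
        _ = 0 := by rw [iha, mul_zero]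
end

section
/- Assume {y_k}_{k=1}^m strictly interlaces {x_j}_{j=1}^n with interlacing indices i_0 < i_1 < ⋯ < i_{m+1} and bands I_r. Then: (1) for every r = 0,…,m and every j ∈ I_r, sign(P_m(x_j)) = (−1)^{m−r}; (2) for every subset J = {j_0 < j_1 < ⋯ < j_m} ⊆ {1,…,n} with |J| = m+1, sign(Q_J'(x_{j_r})) = (−1)^{m−r} for r = 0,…,m; consequently, (3) for every J ∈ 𝔍₊ (writing J = {j_0 < ⋯ < j_m}, so j_r ∈ I_r), one has P_m(x_{j_r}) · Q_J'(x_{j_r}) > 0 for all r, hence the circuit vector ω^{(J)} has all entries ≥ 0 and is strictly positive on J. -/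
lemma mySign_mul (a b : ℝ) : Real.sign (a * b) = Real.sign a * Real.sign b := by
  rcases lt_trichotomy a 0 with ha | ha | ha <;>
  rcases lt_trichotomy b 0 with hb | hb | hb <;>
  simp [ha, hb, Real.sign_of_pos, Real.sign_of_neg, Real.sign_zero,
    mul_pos_of_neg_of_neg, mul_pos, mul_neg_of_neg_of_pos, mul_neg_of_pos_of_neg]

lemma mySign_prod {ι : Type*} (s : Finset ι) (f : ι → ℝ) :
    Real.sign (∏ a ∈ s, f a) = ∏ a ∈ s, Real.sign (f a) := by
  induction s using Finset.cons_induction with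
  | empty => simp [Real.sign_one]
  | cons a s ha ih => rw [Finset.prod_cons, Finset.prod_cons, mySign_mul, ih]

lemma mySign_prod_count {ι : Type*} (s : Finset ι) (f : ι → ℝ)
    (h : ∀ a ∈ s, f a ≠ 0) :
    Real.sign (∏ a ∈ s, f a) = (-1 : ℝ) ^ (s.filter (fun a => f a < 0)).card := by
  rw [mySign_prod, ← Finset.prod_filter_mul_prod_filter_not s (fun a => f a < 0)]
  have h1 : ∏ a ∈ s.filter (fun a => f a < 0), Real.sign (f a)
      = (-1 : ℝ) ^ (s.filter (fun a => f a < 0)).card := by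
    rw [Finset.prod_congr rfl (fun a ha => ?_), Finset.prod_const]
    exact Real.sign_of_neg (Finset.mem_filter.1 ha).2
  have h2 : ∏ a ∈ s.filter (fun a => ¬ f a < 0), Real.sign (f a) = 1 := by
    refine Finset.prod_eq_one (fun a ha => ?_)
    have := Finset.mem_filter.1 ha
    exact Real.sign_of_pos (lt_of_le_of_ne (not_lt.1 this.2) (Ne.symm (h a this.1)))
  rw [h1, h2, mul_one]



/-- The band `I_r = {i_r + 1, …, i_{r+1}}` (1-based indices, realised inside `Fin n`):
`j : Fin n` represents the 1-based index `j + 1`. -/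
def bandR (n : ℕ) (i : ℕ → ℕ) (r : ℕ) : Finset (Fin n) :=
  Finset.univ.filter (fun j => i r + 1 ≤ (j : ℕ) + 1 ∧ (j : ℕ) + 1 ≤ i (r + 1))

/-- under strict interlacing with interlacing indices
`0 = i_0 < i_1 < ⋯ < i_m < i_{m+1} = n` and bands `I_r`:
(1) `sign(P_m(x_j)) = (-1)^{m-r}` for every `j ∈ I_r`;
(2) for every `J = {j_0 < ⋯ < j_m}` with `|J| = m+1`,
    `sign(Q_J'(x_{j_r})) = (-1)^{m-r}` for `r = 0,…,m`;
(3) for every `J ∈ 𝔍₊` one has `P_m(x_{j_r})·Q_J'(x_{j_r}) > 0` for all `r`, hence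
    `ω^{(J)} ≥ 0` with strictly positive entries on `J`. -/
theorem stmt_4 (m n : ℕ) (hm : 1 ≤ m) (hmn : m < n)
    (x y : ℕ → ℝ)
    (hx : ∀ j j', 1 ≤ j → j < j' → j' ≤ n → x j < x j')
    (hy : ∀ k k', 1 ≤ k → k < k' → k' ≤ m → y k < y k')
    (hxy : ∀ j k, 1 ≤ j → j ≤ n → 1 ≤ k → k ≤ m → x j ≠ y k)
    (i : ℕ → ℕ) (hi0 : i 0 = 0) (hin : i (m + 1) = n)
    (himono : ∀ r, r ≤ m → i r < i (r + 1))
    (hinter : ∀ k, 1 ≤ k → k ≤ m → x (i k) < y k ∧ y k < x (i k + 1)) :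
    -- (1)
    (∀ r, r ≤ m → ∀ j ∈ bandR n i r,
      Real.sign (Pm m y (x ((j : ℕ) + 1))) = (-1 : ℝ) ^ (m - r)) ∧
    -- (2)
    (∀ J : Finset (Fin n), J.card = m + 1 →
      ∀ e : Fin (m + 1) → Fin n, StrictMono e → J = Finset.image e Finset.univ →
        ∀ r : Fin (m + 1),
          Real.sign (∏ j' ∈ J.erase (e r), (x ((e r : ℕ) + 1) - x ((j' : ℕ) + 1)))
            = (-1 : ℝ) ^ (m - (r : ℕ))) ∧
    -- (3)
    (∀ J : Finset (Fin n), J.card = m + 1 →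
      (∀ r, r ≤ m → (J ∩ bandR n i r).card = 1) →
      (∀ e : Fin (m + 1) → Fin n, StrictMono e → J = Finset.image e Finset.univ →
        ∀ r : Fin (m + 1),
          0 < Pm m y (x ((e r : ℕ) + 1)) *
            ∏ j' ∈ J.erase (e r), (x ((e r : ℕ) + 1) - x ((j' : ℕ) + 1))) ∧
      (∀ j : Fin n, 0 ≤ circuitR n m x y J j) ∧
      (∀ j ∈ J, 0 < circuitR n m x y J j)) := by
  have imono : ∀ a b, a ≤ b → b ≤ m + 1 → i a ≤ i b := by
    intro a b hab hb
    induction b with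
    | zero =>
      have : a = 0 := by omega
      simp [this]
    | succ b ih =>
      rcases Nat.eq_or_lt_of_le hab with h | h
      · rw [h]
      · have h1 := ih (by omega) (by omega)
        have h2 := himono b (by omega)
        omega
  have hiub : ∀ a, a ≤ m + 1 → i a ≤ n := fun a ha => hin ▸ imono a (m + 1) ha le_rfl
  have hxle : ∀ a b, 1 ≤ a → a ≤ b → b ≤ n → x a ≤ x b := by
    intro a b h1 h2 h3
    rcases Nat.eq_or_lt_of_le h2 with h | h
    · rw [h]
    · exact (hx a b h1 h h3).le
  have part1 : ∀ r, r ≤ m → ∀ j ∈ bandR n i r,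
      Real.sign (Pm m y (x ((j : ℕ) + 1))) = (-1 : ℝ) ^ (m - r) := by
    intro r hr j hj
    obtain ⟨-, hj1, hj2⟩ := Finset.mem_filter.1 hj
    have hjn : (j : ℕ) + 1 ≤ n := j.isLt
    have key1 : ∀ k, 1 ≤ k → k ≤ r → y k < x ((j : ℕ) + 1) := by
      intro k hk1 hk2
      have h2 := (hinter k hk1 (hk2.trans hr)).2
      have h3 : i k + 1 ≤ (j : ℕ) + 1 := by
        have := imono k r hk2 (by omega); omega
      exact h2.trans_le (hxle _ _ (by omega) h3 hjn)
    have key2 : ∀ k, r < k → k ≤ m → x ((j : ℕ) + 1) < y k := by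
      intro k hk1 hk2
      have h1 := (hinter k (by omega) hk2).1
      have hik : (j : ℕ) + 1 ≤ i k := le_trans hj2 (imono (r + 1) k hk1 (by omega))
      exact lt_of_le_of_lt (hxle _ _ (by omega) hik (hiub k (by omega))) h1
    unfold Pm
    rw [mySign_prod_count]
    · congr 1
      have hfe : (Finset.Icc 1 m).filter (fun k => x ((j : ℕ) + 1) - y k < 0)
          = Finset.Icc (r + 1) m := by
        ext k
        simp only [Finset.mem_filter, Finset.mem_Icc, sub_neg]
        constructor
        · rintro ⟨⟨hk1, hk2⟩, hneg⟩
          refine ⟨?_, hk2⟩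
          by_contra hc
          exact absurd hneg (not_lt.2 (key1 k hk1 (by omega)).le)
        · rintro ⟨hk1, hk2⟩
          exact ⟨⟨by omega, hk2⟩, key2 k (by omega) hk2⟩
      rw [hfe, Nat.card_Icc]
      omega
    · intro k hk
      rw [Finset.mem_Icc] at hk
      exact sub_ne_zero.2 (hxy _ _ (by omega) hjn hk.1 hk.2)
  have part2 : ∀ J : Finset (Fin n), J.card = m + 1 →
      ∀ e : Fin (m + 1) → Fin n, StrictMono e → J = Finset.image e Finset.univ →
        ∀ r : Fin (m + 1),
          Real.sign (∏ j' ∈ J.erase (e r), (x ((e r : ℕ) + 1) - x ((j' : ℕ) + 1)))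
            = (-1 : ℝ) ^ (m - (r : ℕ)) := by
    intro J hJ e he hJe r
    have hinj := he.injective
    have herase : J.erase (e r) = Finset.image e (Finset.univ.erase r) := by
      rw [hJe, ← Finset.image_erase hinj]
    have hcmp : ∀ s : Fin (m + 1), s < r → x ((e s : ℕ) + 1) < x ((e r : ℕ) + 1) := by
      intro s hs
      exact hx _ _ (by omega) (by have := he hs; omega) (e r).isLt
    have hcmp' : ∀ s : Fin (m + 1), r < s → x ((e r : ℕ) + 1) < x ((e s : ℕ) + 1) := by
      intro s hs
      exact hx _ _ (by omega) (by have := he hs; omega) (e s).isLt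
    rw [herase, Finset.prod_image (fun a _ b _ h => hinj h)]
    rw [mySign_prod_count]
    · congr 1
      have hfe : (Finset.univ.erase r).filter
            (fun s => x ((e r : ℕ) + 1) - x ((e s : ℕ) + 1) < 0) = Finset.Ioi r := by
        ext s
        simp only [Finset.mem_filter, Finset.mem_erase, Finset.mem_univ, Finset.mem_Ioi,
          sub_neg, true_and, and_true]
        constructor
        · rintro ⟨hsr, hneg⟩
          rcases lt_or_gt_of_ne hsr with h | h
          · exact absurd hneg (not_lt.2 (hcmp s h).le)
          · exact h
        · intro h
          exact ⟨ne_of_gt h, hcmp' s h⟩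
      rw [hfe, Fin.card_Ioi]
      omega
    · intro s hs
      have hsr : s ≠ r := (Finset.mem_erase.1 hs).1
      rcases lt_or_gt_of_ne hsr with h | h
      · exact sub_ne_zero.2 (ne_of_gt (hcmp s h))
      · exact sub_ne_zero.2 (ne_of_lt (hcmp' s h))
  refine ⟨part1, part2, ?_⟩
  intro J hJcard hJb
  have hband_ex : ∀ j : Fin n, ∃ r, r ≤ m ∧ j ∈ bandR n i r := by
    intro j
    have h0 : ∃ s, s ≤ m ∧ i s ≤ (j : ℕ) := ⟨0, by omega, by omega⟩
    classical
    let S := (Finset.range (m + 1)).filter (fun s => i s ≤ (j : ℕ))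
    have hS : S.Nonempty := ⟨0, by simp [S, Finset.mem_filter]; omega⟩
    set r := S.max' hS with hr
    have hrS : r ∈ S := S.max'_mem hS
    rw [Finset.mem_filter, Finset.mem_range] at hrS
    refine ⟨r, by omega, ?_⟩
    rw [bandR, Finset.mem_filter]
    refine ⟨Finset.mem_univ _, by omega, ?_⟩
    by_contra hc
    push_neg at hc
    have hrm : r < m := by
      by_contra hrm
      have : r = m := by omega
      rw [this] at hc
      have := j.isLt
      omega
    have : r + 1 ∈ S := by
      rw [Finset.mem_filter, Finset.mem_range]
      exact ⟨by omega, by omega⟩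
    have := S.le_max' _ this
    omega
  have hband_mem : ∀ (r : ℕ) (j : Fin n), j ∈ bandR n i r ↔
      (i r + 1 ≤ (j : ℕ) + 1 ∧ (j : ℕ) + 1 ≤ i (r + 1)) := by
    intro r j
    simp [bandR, Finset.mem_filter]
  have main : ∀ e : Fin (m + 1) → Fin n, StrictMono e → J = Finset.image e Finset.univ →
      ∀ r : Fin (m + 1),
        0 < Pm m y (x ((e r : ℕ) + 1)) *
          ∏ j' ∈ J.erase (e r), (x ((e r : ℕ) + 1) - x ((j' : ℕ) + 1)) := by
    intro e he hJe r
    classical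
    have hmemJ : ∀ s : Fin (m + 1), e s ∈ J := by
      intro s
      rw [hJe]
      exact Finset.mem_image.2 ⟨s, Finset.mem_univ _, rfl⟩
    -- band function
    choose b hb1 hb2 using fun s : Fin (m + 1) => hband_ex (e s)
    set β : Fin (m + 1) → Fin (m + 1) := fun s => ⟨b s, by have := hb1 s; omega⟩ with hβ
    have hβmem : ∀ s, e s ∈ bandR n i (β s) := fun s => hb2 s
    have hβmono : StrictMono β := by
      intro s t hst
      have hest : e s < e t := he hst
      have h1 := (hband_mem (b s) (e s)).1 (hb2 s)
      have h2 := (hband_mem (b t) (e t)).1 (hb2 t)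
      have hle : b s ≤ b t := by
        by_contra hc
        push_neg at hc
        have h3 : i (b t + 1) ≤ i (b s) := imono _ _ (by omega) (by have := hb1 s; omega)
        have : (e s : ℕ) < (e t : ℕ) := hest
        omega
      have hne : b s ≠ b t := by
        intro hEq
        have hcard := hJb (b s) (hb1 s)
        have hsub := Finset.card_le_one.1 (le_of_eq hcard)
        have hms : e s ∈ J ∩ bandR n i (b s) :=
          Finset.mem_inter.2 ⟨hmemJ s, hb2 s⟩
        have hmt : e t ∈ J ∩ bandR n i (b s) := by
          rw [hEq] at *
          exact Finset.mem_inter.2 ⟨hmemJ t, hb2 t⟩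
        have := hsub _ hms _ hmt
        exact absurd (he.injective this) (ne_of_lt hst)
      exact Fin.mk_lt_mk.2 (lt_of_le_of_ne hle hne)
    have hβid : β = id := by
      have hrange : Set.range β = Set.range (id : Fin (m + 1) → Fin (m + 1)) := by
        rw [Set.range_id]
        exact (Finite.injective_iff_surjective.1 hβmono.injective).range_eq
      exact (StrictMono.range_inj hβmono strictMono_id).1 hrange
    have hband : e r ∈ bandR n i (r : ℕ) := by
      have := hβmem r
      rw [hβid] at this
      exact this
    have h1 := part1 (r : ℕ) r.is_le (e r) hband
    have h2 := part2 J hJcard e he hJe r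
    have hs : Real.sign (Pm m y (x ((e r : ℕ) + 1)) *
        ∏ j' ∈ J.erase (e r), (x ((e r : ℕ) + 1) - x ((j' : ℕ) + 1))) = 1 := by
      rw [mySign_mul, h1, h2, ← pow_add]
      exact Even.neg_one_pow ⟨m - (r : ℕ), rfl⟩
    rcases lt_trichotomy (Pm m y (x ((e r : ℕ) + 1)) *
        ∏ j' ∈ J.erase (e r), (x ((e r : ℕ) + 1) - x ((j' : ℕ) + 1))) 0 with h | h | h
    · rw [Real.sign_of_neg h] at hs; norm_num at hs
    · rw [h, Real.sign_zero] at hs; norm_num at hs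
    · exact h
  refine ⟨main, ?_, ?_⟩
  · intro j
    unfold circuitR
    by_cases hjJ : j ∈ J
    · rw [if_pos hjJ]
      set e : Fin (m + 1) → Fin n := fun k => J.orderEmbOfFin hJcard k with he
      have hemono : StrictMono e := (J.orderEmbOfFin hJcard).strictMono
      have hJe : J = Finset.image e Finset.univ := by
        ext a
        simp only [Finset.mem_image, Finset.mem_univ, true_and]
        constructor
        · intro ha
          have : a ∈ Set.range e := by
            rw [he]
            have := Finset.range_orderEmbOfFin J hJcard
            rw [show (fun k => J.orderEmbOfFin hJcard k) = ⇑(J.orderEmbOfFin hJcard) from rfl,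
              this]
            exact ha
          exact this
        · rintro ⟨s, rfl⟩
          exact Finset.orderEmbOfFin_mem J hJcard s
      obtain ⟨r, hr⟩ : ∃ r, e r = j := by
        have : j ∈ Finset.image e Finset.univ := hJe ▸ hjJ
        obtain ⟨r, -, hr⟩ := Finset.mem_image.1 this
        exact ⟨r, hr⟩
      have := main e hemono hJe r
      rw [hr] at this
      positivity
    · rw [if_neg hjJ]
  · intro j hjJ
    unfold circuitR
    rw [if_pos hjJ]
    set e : Fin (m + 1) → Fin n := fun k => J.orderEmbOfFin hJcard k with he
    have hemono : StrictMono e := (J.orderEmbOfFin hJcard).strictMono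
    have hJe : J = Finset.image e Finset.univ := by
      ext a
      simp only [Finset.mem_image, Finset.mem_univ, true_and]
      constructor
      · intro ha
        have : a ∈ Set.range e := by
          rw [he]
          have := Finset.range_orderEmbOfFin J hJcard
          rw [show (fun k => J.orderEmbOfFin hJcard k) = ⇑(J.orderEmbOfFin hJcard) from rfl,
            this]
          exact ha
        exact this
      · rintro ⟨s, rfl⟩
        exact Finset.orderEmbOfFin_mem J hJcard s
    obtain ⟨r, hr⟩ : ∃ r, e r = j := by
      have : j ∈ Finset.image e Finset.univ := hJe ▸ hjJ
      obtain ⟨r, -, hr⟩ := Finset.mem_image.1 this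
      exact ⟨r, hr⟩
    have := main e hemono hJe r
    rw [hr] at this
    positivity
end

section
/- Assume {y_k}_{k=1}^m strictly interlaces {x_j}_{j=1}^n. Then the set W_{≥0} = { ω ∈ ℝ^n : ∑_{j=1}^n ω_j P_m(x_j) x_j^k = 0 for k = 0,…,m−1, and ω_j ≥ 0 for all j } coincides with the set of all finite nonnegative linear combinations of the circuit vectors ω^{(J)} with J ∈ 𝔍₊, i.e. W_{≥0} = cone{ ω^{(J)} : J ∈ 𝔍₊ }. -/
open Finset Polynomial


lemma sign_prod {α : Type*} [DecidableEq α] (s : Finset α) (f : α → ℝ)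
    (h : ∀ a ∈ s, f a ≠ 0) :
    0 < (-1 : ℝ) ^ ((s.filter (fun a => f a < 0)).card) * ∏ a ∈ s, f a := by
  classical
  induction s using Finset.induction with
  | empty => simp
  | @insert a s ha ih =>
    have hfa := h a (mem_insert_self a s)
    have ih' := ih (fun b hb => h b (mem_insert_of_mem hb))
    rw [Finset.filter_insert, Finset.prod_insert ha]
    by_cases hneg : f a < 0
    · rw [if_pos hneg, Finset.card_insert_of_notMem (fun hc => ha (mem_of_mem_filter a hc))]
      have : (-1:ℝ) ^ ((s.filter (fun a => f a < 0)).card + 1) * (f a * ∏ b ∈ s, f b)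
          = (-f a) * ((-1:ℝ) ^ ((s.filter (fun a => f a < 0)).card) * ∏ b ∈ s, f b) := by
        ring
      rw [this]
      exact mul_pos (by linarith) ih'
    · rw [if_neg hneg]
      have hpos : 0 < f a := lt_of_le_of_ne (not_lt.mp hneg) (Ne.symm hfa)
      have : (-1:ℝ) ^ ((s.filter (fun a => f a < 0)).card) * (f a * ∏ b ∈ s, f b)
          = f a * ((-1:ℝ) ^ ((s.filter (fun a => f a < 0)).card) * ∏ b ∈ s, f b) := by
        ring
      rw [this]
      exact mul_pos hpos ih'

lemma lagrange_zero {ι : Type*} [DecidableEq ι] (s : Finset ι) (v : ι → ℝ)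
    (hv : Set.InjOn v s) (m k : ℕ) (hcard : s.card = m + 1) (hk : k < m) :
    ∑ i ∈ s, (v i) ^ k * (∏ j ∈ s.erase i, (v i - v j))⁻¹ = 0 := by
  have hdeg : ((X : ℝ[X]) ^ k).degree < s.card := by
    rw [degree_X_pow, hcard]
    exact_mod_cast Nat.lt_succ_of_lt hk
  have hinterp : (X : ℝ[X]) ^ k = Lagrange.interpolate s v (fun i => (v i) ^ k) := by
    refine Lagrange.eq_interpolate_of_eval_eq _ hv hdeg (fun i _ => ?_)
    simp
  have hcoeff := congrArg (fun p : ℝ[X] => p.coeff m) hinterp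
  simp only [coeff_X_pow, if_neg hk.ne'] at hcoeff
  rw [Lagrange.interpolate_apply] at hcoeff
  rw [Polynomial.finset_sum_coeff] at hcoeff
  have hb : ∀ i ∈ s, (C ((v i) ^ k) * Lagrange.basis s v i).coeff m
      = (v i) ^ k * (∏ j ∈ s.erase i, (v i - v j))⁻¹ := by
    intro i hi
    rw [coeff_C_mul]
    congr 1
    have hnd : (Lagrange.basis s v i).natDegree = m := by
      rw [Lagrange.natDegree_basis hv hi, hcard]; simp
    rw [← hnd, Polynomial.coeff_natDegree]
    unfold Lagrange.basis
    rw [Polynomial.leadingCoeff_prod]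
    rw [← Finset.prod_inv_distrib]
    refine Finset.prod_congr rfl (fun j hj => ?_)
    unfold Lagrange.basisDivisor
    have hne : v i - v j ≠ 0 := by
      have := hv hi (mem_of_mem_erase hj)
      have hij : i ≠ j := (mem_erase.mp hj).1.symm
      intro hc
      exact hij (this (by linarith))
    rw [leadingCoeff_mul, leadingCoeff_C]
    simp [Polynomial.leadingCoeff_X_sub_C]
  rw [Finset.sum_congr rfl hb] at hcoeff
  exact hcoeff.symm

section Bands
variable {m n : ℕ} {x y : ℕ → ℝ} {i : ℕ → ℕ}

lemma imono (himono : ∀ r, r ≤ m → i r < i (r + 1)) :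
    ∀ r r', r ≤ r' → r' ≤ m + 1 → i r ≤ i r' := by
  intro r r'
  induction r' with
  | zero => exact fun h _ => le_of_eq (congrArg i (Nat.le_zero.mp h))
  | succ r'' ih =>
    intro h h'
    rcases Nat.eq_or_lt_of_le h with he | hl
    · rw [he]
    · exact le_trans (ih (by omega) (by omega)) (le_of_lt (himono r'' (by omega)))

lemma mem_band {j : Fin n} {r : ℕ} :
    j ∈ bandR n i r ↔ i r ≤ (j : ℕ) ∧ (j : ℕ) < i (r + 1) := by
  simp only [bandR, mem_filter, mem_univ, true_and]
  omega

lemma exists_band (hi0 : i 0 = 0) (hin : i (m + 1) = n) (j : Fin n) :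
    ∃ r, r ≤ m ∧ j ∈ bandR n i r := by
  classical
  have h0 : i 0 ≤ (j : ℕ) := by rw [hi0]; exact Nat.zero_le _
  have hspec : i (Nat.findGreatest (fun r => i r ≤ (j : ℕ)) m) ≤ (j : ℕ) :=
    Nat.findGreatest_spec (P := fun r => i r ≤ (j : ℕ)) (Nat.zero_le m) h0
  have hle : Nat.findGreatest (fun r => i r ≤ (j : ℕ)) m ≤ m :=
    Nat.findGreatest_le m
  refine ⟨_, hle, mem_band.mpr ⟨hspec, ?_⟩⟩
  rcases Nat.eq_or_lt_of_le hle with he | hl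
  · rw [he, hin]; exact j.isLt
  · by_contra hc
    have hng := Nat.findGreatest_is_greatest (P := fun r => i r ≤ (j : ℕ))
      (Nat.lt_succ_self _) (by omega : Nat.findGreatest (fun r => i r ≤ (j : ℕ)) m + 1 ≤ m)
    simp only [Nat.succ_eq_add_one] at hng
    omega

lemma band_unique (himono : ∀ r, r ≤ m → i r < i (r + 1)) {j : Fin n} {r r' : ℕ}
    (hr : r ≤ m) (hr' : r' ≤ m) (h : j ∈ bandR n i r) (h' : j ∈ bandR n i r') : r = r' := by
  rw [mem_band] at h h'
  by_contra hne
  have key : ∀ a b : ℕ, a < b → b ≤ m → i a ≤ (j:ℕ) → (j:ℕ) < i (a+1) → i b ≤ (j:ℕ) → False := by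
    intro a b hab hbm h1 h2 h3
    have := imono himono (a+1) b (by omega) (by omega)
    omega
  rcases Nat.lt_or_ge r r' with hlt | hge
  · exact key r r' hlt hr' h.1 h.2 h'.1
  · exact key r' r (by omega) hr h'.1 h'.2 h.1

lemma hxle (hx : ∀ j j', 1 ≤ j → j < j' → j' ≤ n → x j < x j') :
    ∀ a b, 1 ≤ a → a ≤ b → b ≤ n → x a ≤ x b := by
  intro a b h1 h2 h3
  rcases Nat.eq_or_lt_of_le h2 with he | hl
  · rw [he]
  · exact le_of_lt (hx a b h1 hl h3)

lemma band_lt_gt (hx : ∀ j j', 1 ≤ j → j < j' → j' ≤ n → x j < x j')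
    (himono : ∀ r, r ≤ m → i r < i (r + 1))
    (hin : i (m + 1) = n)
    (hinter : ∀ k, 1 ≤ k → k ≤ m → x (i k) < y k ∧ y k < x (i k + 1))
    {j : Fin n} {r : ℕ} (hr : r ≤ m) (hj : j ∈ bandR n i r) :
    (∀ k, 1 ≤ k → k ≤ r → y k < x ((j : ℕ) + 1)) ∧
    (∀ k, r + 1 ≤ k → k ≤ m → x ((j : ℕ) + 1) < y k) := by
  rw [mem_band] at hj
  constructor
  · intro k hk1 hkr
    have h1 : y k < x (i k + 1) := (hinter k hk1 (by omega)).2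
    have h2 : x (i k + 1) ≤ x ((j : ℕ) + 1) := by
      refine hxle hx _ _ (by omega) ?_ (by omega)
      have := imono himono k r (by omega) (by omega)
      omega
    linarith
  · intro k hk1 hkm
    have h1 : x (i k) < y k := (hinter k (by omega) hkm).1
    have h2 : x ((j : ℕ) + 1) ≤ x (i k) := by
      have hik : i (r+1) ≤ i k := imono himono (r+1) k hk1 (by omega)
      have hikn : i k ≤ n := by
        have := imono himono k (m+1) (by omega) (le_refl _)
        omega
      refine hxle hx _ _ (by omega) (by omega) hikn
    linarith

lemma Pm_ne_zero (hxy : ∀ j k, 1 ≤ j → j ≤ n → 1 ≤ k → k ≤ m → x j ≠ y k)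
    {j : Fin n} : Pm m y (x ((j : ℕ) + 1)) ≠ 0 := by
  unfold Pm
  rw [Finset.prod_ne_zero_iff]
  intro k hk
  rw [mem_Icc] at hk
  have := hxy ((j:ℕ)+1) k (by omega) (by omega) hk.1 hk.2
  intro hc
  exact this (by linarith)

lemma Psign (hx : ∀ j j', 1 ≤ j → j < j' → j' ≤ n → x j < x j')
    (hxy : ∀ j k, 1 ≤ j → j ≤ n → 1 ≤ k → k ≤ m → x j ≠ y k)
    (himono : ∀ r, r ≤ m → i r < i (r + 1))
    (hin : i (m + 1) = n)
    (hinter : ∀ k, 1 ≤ k → k ≤ m → x (i k) < y k ∧ y k < x (i k + 1))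
    {j : Fin n} {r : ℕ} (hr : r ≤ m) (hj : j ∈ bandR n i r) :
    0 < (-1 : ℝ) ^ (m - r) * Pm m y (x ((j : ℕ) + 1)) := by
  obtain ⟨hlo, hhi⟩ := band_lt_gt hx himono hin hinter hr hj
  have hfil : (Finset.Icc 1 m).filter (fun k => x ((j:ℕ)+1) - y k < 0) = Finset.Icc (r+1) m := by
    ext k
    simp only [mem_filter, mem_Icc, sub_neg]
    constructor
    · rintro ⟨⟨h1, h2⟩, h3⟩
      refine ⟨?_, h2⟩
      by_contra hc
      exact absurd h3 (not_lt.mpr (le_of_lt (hlo k h1 (by omega))))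
    · rintro ⟨h1, h2⟩
      exact ⟨⟨by omega, h2⟩, hhi k h1 h2⟩
  have := sign_prod (Finset.Icc 1 m) (fun k => x ((j:ℕ)+1) - y k) ?_
  · rw [hfil] at this
    rw [Nat.card_Icc] at this
    unfold Pm
    convert this using 3
    omega
  · intro k hk
    rw [mem_Icc] at hk
    intro hc
    have hc' : x ((j:ℕ)+1) - y k = 0 := hc
    exact hxy ((j:ℕ)+1) k (by omega) (by omega) hk.1 hk.2 (by linarith)

end Bands

section Circ
variable {m n : ℕ} {x y : ℕ → ℝ} {i : ℕ → ℕ}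

lemma vinj (hx : ∀ j j', 1 ≤ j → j < j' → j' ≤ n → x j < x j') :
    ∀ j j' : Fin n, x ((j : ℕ) + 1) = x ((j' : ℕ) + 1) → j = j' := by
  intro j j' h
  by_contra hne
  rcases lt_trichotomy j j' with hl | he | hl
  · exact absurd h (ne_of_lt (hx _ _ (by omega) (by exact_mod_cast Nat.add_lt_add_right hl 1) (by omega)))
  · exact hne he
  · exact absurd h.symm (ne_of_lt (hx _ _ (by omega) (by exact_mod_cast Nat.add_lt_add_right hl 1) (by omega)))

lemma vmono (hx : ∀ j j', 1 ≤ j → j < j' → j' ≤ n → x j < x j')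
    {j j' : Fin n} (h : j < j') : x ((j : ℕ) + 1) < x ((j' : ℕ) + 1) :=
  hx _ _ (by omega) (by exact_mod_cast Nat.add_lt_add_right h 1) (by omega)

lemma circuit_moment (hx : ∀ j j', 1 ≤ j → j < j' → j' ≤ n → x j < x j')
    (hxy : ∀ j k, 1 ≤ j → j ≤ n → 1 ≤ k → k ≤ m → x j ≠ y k)
    (J : Finset (Fin n)) (hcard : J.card = m + 1) {k : ℕ} (hk : k < m) :
    ∑ j : Fin n, circuitR n m x y J j * Pm m y (x ((j : ℕ) + 1)) * x ((j : ℕ) + 1) ^ k = 0 := by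
  classical
  have hstep : ∀ j : Fin n,
      circuitR n m x y J j * Pm m y (x ((j : ℕ) + 1)) * x ((j : ℕ) + 1) ^ k
      = if j ∈ J then (x ((j : ℕ) + 1)) ^ k *
          (∏ j' ∈ J.erase j, (x ((j : ℕ) + 1) - x ((j' : ℕ) + 1)))⁻¹ else 0 := by
    intro j
    unfold circuitR
    by_cases hj : j ∈ J
    · rw [if_pos hj, if_pos hj]
      have hP : Pm m y (x ((j : ℕ) + 1)) ≠ 0 := Pm_ne_zero hxy
      have key : ∀ (P Q t : ℝ), P ≠ 0 → 1 / (P * Q) * P * t = t * Q⁻¹ := by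
        intro P Q t hP
        by_cases hQ : Q = 0
        · simp [hQ]
        · field_simp
      exact key _ _ _ hP
    · rw [if_neg hj, if_neg hj, zero_mul, zero_mul]
  rw [Finset.sum_congr rfl (fun j _ => hstep j), Finset.sum_ite_mem, Finset.univ_inter]
  exact lagrange_zero J (fun j : Fin n => x ((j : ℕ) + 1))
    (fun a _ b _ h => vinj hx a b h) m k hcard hk

lemma Qsign (hx : ∀ j j', 1 ≤ j → j < j' → j' ≤ n → x j < x j')
    (himono : ∀ r, r ≤ m → i r < i (r + 1))
    (hi0 : i 0 = 0) (hin : i (m + 1) = n)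
    {J : Finset (Fin n)} (hbands : ∀ r, r ≤ m → (J ∩ bandR n i r).card = 1)
    {j : Fin n} (hj : j ∈ J) {r : ℕ} (hr : r ≤ m) (hjr : j ∈ bandR n i r) :
    0 < (-1 : ℝ) ^ (m - r) * ∏ j' ∈ J.erase j, (x ((j : ℕ) + 1) - x ((j' : ℕ) + 1)) := by
  classical
  have hne : ∀ j' ∈ J.erase j, x ((j : ℕ) + 1) - x ((j' : ℕ) + 1) ≠ 0 := by
    intro j' hj' hc
    have : j = j' := vinj hx j j' (by linarith)
    exact (mem_erase.mp hj').1 this.symm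
  have hfil : (J.erase j).filter (fun j' : Fin n => x ((j : ℕ) + 1) - x ((j' : ℕ) + 1) < 0)
      = (Finset.Icc (r+1) m).biUnion (fun r' => J ∩ bandR n i r') := by
    ext j'
    simp only [mem_filter, mem_erase, mem_biUnion, mem_Icc, mem_inter, sub_neg]
    constructor
    · rintro ⟨⟨hne', hj'J⟩, hlt⟩
      have hjj' : j < j' := by
        by_contra hc
        push_neg at hc
        rcases eq_or_lt_of_le hc with he | hl
        · exact hne' (by exact_mod_cast he)
        · exact absurd hlt (not_lt.mpr (le_of_lt (vmono hx hl)))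
      obtain ⟨r'', hr''m, hr''⟩ := exists_band hi0 hin j'
      refine ⟨r'', ⟨?_, hr''m⟩, hj'J, hr''⟩
      rcases Nat.lt_or_ge r'' (r+1) with hlt' | hge
      · exfalso
        rcases Nat.lt_or_ge r'' r with hlt'' | hge'
        · have h1 := (mem_band.mp hr'').2
          have h2 := (mem_band.mp hjr).1
          have := imono himono (r''+1) r (by omega) (by omega)
          have : (j' : ℕ) < (j : ℕ) := by omega
          omega
        · have hrr : r'' = r := by omega
          subst hrr
          obtain ⟨e, he⟩ := Finset.card_eq_one.mp (hbands r'' hr)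
          have h1 : j ∈ J ∩ bandR n i r'' := Finset.mem_inter.mpr ⟨hj, hjr⟩
          have h2 : j' ∈ J ∩ bandR n i r'' := Finset.mem_inter.mpr ⟨hj'J, hr''⟩
          rw [he, Finset.mem_singleton] at h1 h2
          exact hne' (h2.trans h1.symm)
      · exact hge
    · rintro ⟨r', ⟨hr'1, hr'2⟩, hj'J, hj'b⟩
      have h1 := (mem_band.mp hjr).2
      have h2 := (mem_band.mp hj'b).1
      have h3 := imono himono (r+1) r' hr'1 (by omega)
      have hjj' : j < j' := by
        have : (j : ℕ) < (j' : ℕ) := by omega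
        exact_mod_cast this
      exact ⟨⟨fun hc => absurd (congrArg Fin.val hc) (by omega), hj'J⟩, vmono hx hjj'⟩
  have hdisj : ∀ r1 ∈ Finset.Icc (r+1) m, ∀ r2 ∈ Finset.Icc (r+1) m, r1 ≠ r2 →
      Disjoint (J ∩ bandR n i r1) (J ∩ bandR n i r2) := by
    intro r1 h1 r2 h2 hne12
    rw [mem_Icc] at h1 h2
    rw [Finset.disjoint_left]
    intro a ha1 ha2
    rw [Finset.mem_inter] at ha1 ha2
    exact hne12 (band_unique himono (by omega) (by omega) ha1.2 ha2.2)
  have hcard : ((J.erase j).filter (fun j' : Fin n => x ((j : ℕ) + 1) - x ((j' : ℕ) + 1) < 0)).card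
      = m - r := by
    rw [hfil, Finset.card_biUnion hdisj]
    rw [Finset.sum_congr rfl (fun r' hr' => hbands r' (by rw [mem_Icc] at hr'; omega))]
    simp [Nat.card_Icc]
  have := sign_prod (J.erase j) (fun j' : Fin n => x ((j : ℕ) + 1) - x ((j' : ℕ) + 1)) hne
  simpa only [hcard] using this

lemma circuit_pos (hx : ∀ j j', 1 ≤ j → j < j' → j' ≤ n → x j < x j')
    (hxy : ∀ j k, 1 ≤ j → j ≤ n → 1 ≤ k → k ≤ m → x j ≠ y k)
    (himono : ∀ r, r ≤ m → i r < i (r + 1))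
    (hi0 : i 0 = 0) (hin : i (m + 1) = n)
    (hinter : ∀ k, 1 ≤ k → k ≤ m → x (i k) < y k ∧ y k < x (i k + 1))
    {J : Finset (Fin n)} (hbands : ∀ r, r ≤ m → (J ∩ bandR n i r).card = 1)
    {j : Fin n} (hj : j ∈ J) : 0 < circuitR n m x y J j := by
  obtain ⟨r, hr, hjr⟩ := exists_band hi0 hin j
  have hP := Psign hx hxy himono hin hinter hr hjr
  have hQ := Qsign hx himono hi0 hin hbands hj hr hjr
  unfold circuitR
  rw [if_pos hj]
  apply one_div_pos.mpr
  have hmul := mul_pos hP hQ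
  have hsq : ((-1 : ℝ) ^ (m - r)) * ((-1 : ℝ) ^ (m - r)) = 1 := by
    rw [← pow_add]
    exact Even.neg_one_pow ⟨m - r, rfl⟩
  nlinarith [hmul, hsq]

lemma circuit_nonneg (hx : ∀ j j', 1 ≤ j → j < j' → j' ≤ n → x j < x j')
    (hxy : ∀ j k, 1 ≤ j → j ≤ n → 1 ≤ k → k ≤ m → x j ≠ y k)
    (himono : ∀ r, r ≤ m → i r < i (r + 1))
    (hi0 : i 0 = 0) (hin : i (m + 1) = n)
    (hinter : ∀ k, 1 ≤ k → k ≤ m → x (i k) < y k ∧ y k < x (i k + 1))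
    {J : Finset (Fin n)} (hbands : ∀ r, r ≤ m → (J ∩ bandR n i r).card = 1)
    (j : Fin n) : 0 ≤ circuitR n m x y J j := by
  by_cases hj : j ∈ J
  · exact le_of_lt (circuit_pos hx hxy himono hi0 hin hinter hbands hj)
  · unfold circuitR
    rw [if_neg hj]

end Circ

section Vanish
variable {m n : ℕ} {x y : ℕ → ℝ} {i : ℕ → ℕ}

lemma poly_moment {ω : Fin n → ℝ}
    (hmom : ∀ k, k < m →
      ∑ j : Fin n, ω j * Pm m y (x ((j : ℕ) + 1)) * x ((j : ℕ) + 1) ^ k = 0)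
    (q : ℝ[X]) (hq : q.natDegree < m) :
    ∑ j : Fin n, ω j * Pm m y (x ((j : ℕ) + 1)) * q.eval (x ((j : ℕ) + 1)) = 0 := by
  have hev : ∀ j : Fin n, q.eval (x ((j : ℕ) + 1))
      = ∑ k ∈ Finset.range m, q.coeff k * x ((j : ℕ) + 1) ^ k := fun j =>
    Polynomial.eval_eq_sum_range' hq _
  calc ∑ j : Fin n, ω j * Pm m y (x ((j : ℕ) + 1)) * q.eval (x ((j : ℕ) + 1))
      = ∑ j : Fin n, ∑ k ∈ Finset.range m,
          q.coeff k * (ω j * Pm m y (x ((j : ℕ) + 1)) * x ((j : ℕ) + 1) ^ k) := by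
        refine Finset.sum_congr rfl (fun j _ => ?_)
        rw [hev j, Finset.mul_sum]
        refine Finset.sum_congr rfl (fun k _ => by ring)
    _ = ∑ k ∈ Finset.range m,
          q.coeff k * ∑ j : Fin n, ω j * Pm m y (x ((j : ℕ) + 1)) * x ((j : ℕ) + 1) ^ k := by
        rw [Finset.sum_comm]
        exact Finset.sum_congr rfl (fun k _ => (Finset.mul_sum _ _ _).symm)
    _ = 0 := Finset.sum_eq_zero (fun k hk => by
          rw [hmom k (Finset.mem_range.mp hk), mul_zero])

lemma vanish_of_band_zero
    (hx : ∀ j j', 1 ≤ j → j < j' → j' ≤ n → x j < x j')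
    (hxy : ∀ j k, 1 ≤ j → j ≤ n → 1 ≤ k → k ≤ m → x j ≠ y k)
    (himono : ∀ r, r ≤ m → i r < i (r + 1))
    (hi0 : i 0 = 0) (hin : i (m + 1) = n)
    {ω : Fin n → ℝ}
    (hmom : ∀ k, k < m →
      ∑ j : Fin n, ω j * Pm m y (x ((j : ℕ) + 1)) * x ((j : ℕ) + 1) ^ k = 0)
    (hpos : ∀ j : Fin n, 0 ≤ ω j)
    {r0 : ℕ} (hr0 : r0 ≤ m)
    (q : ℝ[X]) (hqdeg : q.natDegree < m)
    (hqsign : ∀ (r : ℕ) (j : Fin n), r ≤ m → r ≠ r0 → j ∈ bandR n i r →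
      0 < Pm m y (x ((j : ℕ) + 1)) * q.eval (x ((j : ℕ) + 1)))
    (hzero : ∀ j ∈ bandR n i r0, ω j = 0) :
    ∀ j : Fin n, ω j = 0 := by
  classical
  have hS := poly_moment hmom q hqdeg
  have hterm : ∀ j : Fin n,
      0 ≤ ω j * Pm m y (x ((j : ℕ) + 1)) * q.eval (x ((j : ℕ) + 1)) := by
    intro j
    obtain ⟨r, hr, hjr⟩ := exists_band hi0 hin j
    by_cases hrr0 : r = r0
    · rw [hzero j (hrr0 ▸ hjr), zero_mul, zero_mul]
    · have := hqsign r j hr hrr0 hjr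
      rw [mul_assoc]
      exact mul_nonneg (hpos j) (le_of_lt this)
  have hall := (Finset.sum_eq_zero_iff_of_nonneg (fun j _ => hterm j)).mp hS
  intro j
  obtain ⟨r, hr, hjr⟩ := exists_band hi0 hin j
  by_cases hrr0 : r = r0
  · exact hzero j (hrr0 ▸ hjr)
  · have hq0 := hqsign r j hr hrr0 hjr
    have := hall j (Finset.mem_univ j)
    rw [mul_assoc] at this
    rcases mul_eq_zero.mp this with h | h
    · exact h
    · exact absurd h (ne_of_gt hq0)

end Vanish

section QPoly
variable {m n : ℕ} {x y : ℕ → ℝ} {i : ℕ → ℕ}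

lemma natDegree_prod_lin (s : Finset ℕ) (c : ℕ → ℝ) :
    (∏ k ∈ s, ((X : ℝ[X]) - C (c k))).natDegree = s.card := by
  rw [Polynomial.natDegree_prod _ _ (fun k _ => X_sub_C_ne_zero (c k))]
  simp [natDegree_X_sub_C]

lemma eval_prod_lin (s : Finset ℕ) (c : ℕ → ℝ) (t : ℝ) :
    (∏ k ∈ s, ((X : ℝ[X]) - C (c k))).eval t = ∏ k ∈ s, (t - c k) := by
  simp [eval_prod]

lemma exists_sign_poly (hm : 1 ≤ m)
    (hx : ∀ j j', 1 ≤ j → j < j' → j' ≤ n → x j < x j')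
    (hxy : ∀ j k, 1 ≤ j → j ≤ n → 1 ≤ k → k ≤ m → x j ≠ y k)
    (himono : ∀ r, r ≤ m → i r < i (r + 1))
    (hin : i (m + 1) = n)
    (hinter : ∀ k, 1 ≤ k → k ≤ m → x (i k) < y k ∧ y k < x (i k + 1))
    {r0 : ℕ} (hr0 : r0 ≤ m) :
    ∃ q : ℝ[X], q.natDegree < m ∧ ∀ (r : ℕ) (j : Fin n), r ≤ m → r ≠ r0 → j ∈ bandR n i r →
      0 < Pm m y (x ((j : ℕ) + 1)) * q.eval (x ((j : ℕ) + 1)) := by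
  classical
  have hfac : ∀ (j : Fin n) (k : ℕ), 1 ≤ k → k ≤ m → x ((j : ℕ) + 1) - y k ≠ 0 := by
    intro j k h1 h2 hc
    exact hxy ((j : ℕ) + 1) k (by omega) (by omega) h1 h2 (by linarith)
  rcases Nat.eq_zero_or_pos r0 with hr00 | hr0pos
  · -- r0 = 0
    subst hr00
    refine ⟨∏ k ∈ Finset.Icc 2 m, ((X : ℝ[X]) - C (y k)), ?_, ?_⟩
    · rw [natDegree_prod_lin]; rw [Nat.card_Icc]; omega
    · intro r j hr hne hjr
      have hsplit : Finset.Icc 1 m = insert 1 (Finset.Icc 2 m) := by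
        ext k; simp only [mem_Icc, mem_insert]; omega
      have hP : Pm m y (x ((j : ℕ) + 1))
          = (x ((j : ℕ) + 1) - y 1) * ∏ k ∈ Finset.Icc 2 m, (x ((j : ℕ) + 1) - y k) := by
        unfold Pm; rw [hsplit, Finset.prod_insert (by simp)]
      rw [hP, eval_prod_lin]
      have h1 : 0 < x ((j : ℕ) + 1) - y 1 := by
        have := (band_lt_gt hx himono hin hinter hr hjr).1 1 le_rfl (by omega)
        linarith
      have h2 : 0 < ∏ k ∈ Finset.Icc 2 m,
          ((x ((j : ℕ) + 1) - y k) * (x ((j : ℕ) + 1) - y k)) := by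
        refine Finset.prod_pos (fun k hk => ?_)
        rw [mem_Icc] at hk
        exact mul_self_pos.mpr (hfac j k (by omega) hk.2)
      calc (0:ℝ) < (x ((j : ℕ) + 1) - y 1) * ∏ k ∈ Finset.Icc 2 m,
            ((x ((j : ℕ) + 1) - y k) * (x ((j : ℕ) + 1) - y k)) := mul_pos h1 h2
        _ = (x ((j : ℕ) + 1) - y 1) * (∏ k ∈ Finset.Icc 2 m, (x ((j : ℕ) + 1) - y k))
              * ∏ k ∈ Finset.Icc 2 m, (x ((j : ℕ) + 1) - y k) := by
            rw [Finset.prod_mul_distrib (s := Finset.Icc 2 m)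
              (f := fun k => x ((j : ℕ) + 1) - y k) (g := fun k => x ((j : ℕ) + 1) - y k)]
            ring
  rcases Nat.eq_or_lt_of_le hr0 with hr0m | hr0lt
  · -- r0 = m
    subst hr0m
    refine ⟨-∏ k ∈ Finset.Icc 1 (r0 - 1), ((X : ℝ[X]) - C (y k)), ?_, ?_⟩
    · rw [natDegree_neg, natDegree_prod_lin, Nat.card_Icc]; omega
    · intro r j hr hne hjr
      have hsplit : Finset.Icc 1 r0 = insert r0 (Finset.Icc 1 (r0 - 1)) := by
        ext k; simp only [mem_Icc, mem_insert]; omega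
      have hP : Pm r0 y (x ((j : ℕ) + 1))
          = (x ((j : ℕ) + 1) - y r0) * ∏ k ∈ Finset.Icc 1 (r0 - 1), (x ((j : ℕ) + 1) - y k) := by
        unfold Pm; rw [hsplit, Finset.prod_insert (by simp only [mem_Icc]; omega)]
      rw [hP, eval_neg, eval_prod_lin]
      have h1 : 0 < y r0 - x ((j : ℕ) + 1) := by
        have := (band_lt_gt hx himono hin hinter hr hjr).2 r0 (by omega) le_rfl
        linarith
      have h2 : 0 < ∏ k ∈ Finset.Icc 1 (r0 - 1),
          ((x ((j : ℕ) + 1) - y k) * (x ((j : ℕ) + 1) - y k)) := by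
        refine Finset.prod_pos (fun k hk => ?_)
        rw [mem_Icc] at hk
        exact mul_self_pos.mpr (hfac j k hk.1 (by omega))
      calc (0:ℝ) < (y r0 - x ((j : ℕ) + 1)) * ∏ k ∈ Finset.Icc 1 (r0 - 1),
            ((x ((j : ℕ) + 1) - y k) * (x ((j : ℕ) + 1) - y k)) := mul_pos h1 h2
        _ = (x ((j : ℕ) + 1) - y r0) * (∏ k ∈ Finset.Icc 1 (r0 - 1), (x ((j : ℕ) + 1) - y k))
              * -∏ k ∈ Finset.Icc 1 (r0 - 1), (x ((j : ℕ) + 1) - y k) := by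
            rw [Finset.prod_mul_distrib (s := Finset.Icc 1 (r0 - 1))
              (f := fun k => x ((j : ℕ) + 1) - y k) (g := fun k => x ((j : ℕ) + 1) - y k)]
            ring
  · -- 1 ≤ r0 < m
    set E := ((Finset.Icc 1 m).erase r0).erase (r0 + 1) with hE
    have hr01 : r0 + 1 ∈ (Finset.Icc 1 m).erase r0 := by
      rw [Finset.mem_erase, mem_Icc]; omega
    have hr0mem : r0 ∈ Finset.Icc 1 m := by rw [mem_Icc]; omega
    refine ⟨((X : ℝ[X]) - C (x 1 - 1)) * ∏ k ∈ E, ((X : ℝ[X]) - C (y k)), ?_, ?_⟩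
    · rw [natDegree_mul (X_sub_C_ne_zero _)
        (Finset.prod_ne_zero_iff.mpr (fun k _ => X_sub_C_ne_zero (y k)))]
      rw [natDegree_X_sub_C, natDegree_prod_lin, hE]
      rw [Finset.card_erase_of_mem hr01, Finset.card_erase_of_mem hr0mem, Nat.card_Icc]
      omega
    · intro r j hr hne hjr
      have hP : Pm m y (x ((j : ℕ) + 1))
          = (x ((j : ℕ) + 1) - y r0) * ((x ((j : ℕ) + 1) - y (r0 + 1))
            * ∏ k ∈ E, (x ((j : ℕ) + 1) - y k)) := by
        unfold Pm
        rw [← Finset.mul_prod_erase _ _ hr0mem, ← Finset.mul_prod_erase _ _ hr01]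
      rw [hP, eval_mul, eval_sub, eval_X, eval_C, eval_prod_lin]
      have hz : 0 < x ((j : ℕ) + 1) - (x 1 - 1) := by
        have := hxle hx 1 ((j : ℕ) + 1) le_rfl (by omega) (by omega)
        linarith
      have hpair : 0 < (x ((j : ℕ) + 1) - y r0) * (x ((j : ℕ) + 1) - y (r0 + 1)) := by
        obtain ⟨hlo, hhi⟩ := band_lt_gt hx himono hin hinter hr hjr
        rcases Nat.lt_or_ge r r0 with hlt | hge
        · have h1 := hhi r0 (by omega) (by omega)
          have h2 := hhi (r0 + 1) (by omega) (by omega)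
          exact mul_pos_of_neg_of_neg (by linarith) (by linarith)
        · have hgt : r0 < r := by omega
          have h1 := hlo r0 (by omega) (by omega)
          have h2 := hlo (r0 + 1) (by omega) (by omega)
          exact mul_pos (by linarith) (by linarith)
      have h2 : 0 < ∏ k ∈ E,
          ((x ((j : ℕ) + 1) - y k) * (x ((j : ℕ) + 1) - y k)) := by
        refine Finset.prod_pos (fun k hk => ?_)
        have hk' : k ∈ Finset.Icc 1 m := Finset.mem_of_mem_erase (Finset.mem_of_mem_erase hk)
        rw [mem_Icc] at hk'
        exact mul_self_pos.mpr (hfac j k hk'.1 hk'.2)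
      calc (0:ℝ) < ((x ((j : ℕ) + 1) - y r0) * (x ((j : ℕ) + 1) - y (r0 + 1)))
            * (x ((j : ℕ) + 1) - (x 1 - 1))
            * ∏ k ∈ E, ((x ((j : ℕ) + 1) - y k) * (x ((j : ℕ) + 1) - y k)) :=
          mul_pos (mul_pos hpair hz) h2
        _ = (x ((j : ℕ) + 1) - y r0) * ((x ((j : ℕ) + 1) - y (r0 + 1))
              * (∏ k ∈ E, (x ((j : ℕ) + 1) - y k)))
            * ((x ((j : ℕ) + 1) - (x 1 - 1)) * ∏ k ∈ E, (x ((j : ℕ) + 1) - y k)) := by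
            rw [Finset.prod_mul_distrib (s := E)
              (f := fun k => x ((j : ℕ) + 1) - y k) (g := fun k => x ((j : ℕ) + 1) - y k)]
            ring

end QPoly

section Main
variable {m n : ℕ} {x y : ℕ → ℝ} {i : ℕ → ℕ}

lemma cone_of_mem (hm : 1 ≤ m) (hmn : m < n)
    (hx : ∀ j j', 1 ≤ j → j < j' → j' ≤ n → x j < x j')
    (hxy : ∀ j k, 1 ≤ j → j ≤ n → 1 ≤ k → k ≤ m → x j ≠ y k)
    (hi0 : i 0 = 0) (hin : i (m + 1) = n)
    (himono : ∀ r, r ≤ m → i r < i (r + 1))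
    (hinter : ∀ k, 1 ≤ k → k ≤ m → x (i k) < y k ∧ y k < x (i k + 1))
    (N : ℕ) :
    ∀ ω : Fin n → ℝ,
      (Finset.univ.filter (fun j => ω j ≠ 0)).card = N →
      (∀ k, k < m →
        ∑ j : Fin n, ω j * Pm m y (x ((j : ℕ) + 1)) * x ((j : ℕ) + 1) ^ k = 0) →
      (∀ j : Fin n, 0 ≤ ω j) →
      ∃ t : Finset (Fin n) → ℝ,
        (∀ J, 0 ≤ t J) ∧
        (∀ J, t J ≠ 0 →
          J.card = m + 1 ∧ ∀ r, r ≤ m → (J ∩ bandR n i r).card = 1) ∧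
        ω = ∑ J : Finset (Fin n), t J • circuitR n m x y J := by
  classical
  induction N using Nat.strong_induction_on with
  | _ N ih =>
    intro ω hN hmom hpos
    by_cases hall : ∀ j, ω j = 0
    · refine ⟨fun _ => 0, fun _ => le_refl _, fun J hJ => absurd rfl hJ, ?_⟩
      have h0 : (∑ J : Finset (Fin n), (0:ℝ) • circuitR n m x y J) = 0 := by
        simp
      rw [h0]
      funext j
      exact hall j
    · push_neg at hall
      obtain ⟨j0, hj0⟩ := hall
      -- every band meets the support
      have hband : ∀ r, r ≤ m → ∃ j, j ∈ bandR n i r ∧ ω j ≠ 0 := by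
        by_contra hc
        push_neg at hc
        obtain ⟨r0, hr0, hno⟩ := hc
        obtain ⟨q, hqdeg, hqsign⟩ := exists_sign_poly hm hx hxy himono hin hinter hr0
        have hzero : ∀ j ∈ bandR n i r0, ω j = 0 := hno
        have := vanish_of_band_zero hx hxy himono hi0 hin hmom hpos hr0 q hqdeg hqsign hzero
        exact hj0 (this j0)
      have hband' : ∀ r : ℕ, ∃ j : Fin n, r ≤ m → (j ∈ bandR n i r ∧ ω j ≠ 0) := by
        intro r
        by_cases hr : r ≤ m
        · obtain ⟨j, hj⟩ := hband r hr
          exact ⟨j, fun _ => hj⟩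
        · exact ⟨⟨0, by omega⟩, fun h => absurd h hr⟩
      choose g hg using hband'
      set J : Finset (Fin n) := (Finset.range (m+1)).image g with hJdef
      have hgmem : ∀ r, r ≤ m → g r ∈ bandR n i r := fun r hr => (hg r hr).1
      have hgne : ∀ r, r ≤ m → ω (g r) ≠ 0 := fun r hr => (hg r hr).2
      have hginj : Set.InjOn g (Finset.range (m+1)) := by
        intro a ha b hb hab
        simp only [Finset.coe_range, Set.mem_Iio] at ha hb
        exact band_unique himono (by omega) (by omega) (hgmem a (by omega))
          (hab ▸ hgmem b (by omega))
      have hJcard : J.card = m + 1 := by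
        rw [hJdef, Finset.card_image_of_injOn hginj, Finset.card_range]
      have hJband : ∀ r, r ≤ m → J ∩ bandR n i r = {g r} := by
        intro r hr
        ext a
        simp only [Finset.mem_inter, hJdef, Finset.mem_image, Finset.mem_range,
          Finset.mem_singleton]
        constructor
        · rintro ⟨⟨r', hr', rfl⟩, hab⟩
          have : r' = r := band_unique himono (by omega) hr (hgmem r' (by omega)) hab
          rw [this]
        · rintro rfl
          exact ⟨⟨r, by omega, rfl⟩, hgmem r hr⟩
      have hJbands : ∀ r, r ≤ m → (J ∩ bandR n i r).card = 1 := by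
        intro r hr; rw [hJband r hr]; exact Finset.card_singleton _
      have hJpos : ∀ j ∈ J, 0 < ω j := by
        intro j hj
        rw [hJdef, Finset.mem_image] at hj
        obtain ⟨r, hr, rfl⟩ := hj
        rw [Finset.mem_range] at hr
        exact lt_of_le_of_ne (hpos _) (Ne.symm (hgne r (by omega)))
      have hcpos : ∀ j ∈ J, 0 < circuitR n m x y J j :=
        fun j hj => circuit_pos hx hxy himono hi0 hin hinter hJbands hj
      have hJne : J.Nonempty := ⟨g 0, by
        rw [hJdef]; exact Finset.mem_image_of_mem g (Finset.mem_range.mpr (by omega))⟩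
      obtain ⟨j₀, hj₀J, hmin⟩ :=
        Finset.exists_min_image J (fun j => ω j / circuitR n m x y J j) hJne
      set lam : ℝ := ω j₀ / circuitR n m x y J j₀ with hlamdef
      have hlam : 0 < lam := div_pos (hJpos j₀ hj₀J) (hcpos j₀ hj₀J)
      set ω' : Fin n → ℝ := fun j => ω j - lam * circuitR n m x y J j with hω'def
      have hω'pos : ∀ j, 0 ≤ ω' j := by
        intro j
        by_cases hj : j ∈ J
        · have h1 := hmin j hj
          have h2 := hcpos j hj
          have : lam * circuitR n m x y J j ≤ ω j := by
            rw [← le_div_iff₀ h2]; exact h1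
          simp only [hω'def]
          linarith
        · simp only [hω'def, circuitR, if_neg hj, mul_zero, sub_zero]
          exact hpos j
      have hω'mom : ∀ k, k < m →
          ∑ j : Fin n, ω' j * Pm m y (x ((j : ℕ) + 1)) * x ((j : ℕ) + 1) ^ k = 0 := by
        intro k hk
        have hterm : ∀ j : Fin n,
            ω' j * Pm m y (x ((j : ℕ) + 1)) * x ((j : ℕ) + 1) ^ k
            = ω j * Pm m y (x ((j : ℕ) + 1)) * x ((j : ℕ) + 1) ^ k
              - lam * (circuitR n m x y J j * Pm m y (x ((j : ℕ) + 1))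
                * x ((j : ℕ) + 1) ^ k) := by
          intro j; simp only [hω'def]; ring
        rw [Finset.sum_congr rfl (fun j _ => hterm j), Finset.sum_sub_distrib,
          ← Finset.mul_sum, hmom k hk, circuit_moment hx hxy J hJcard hk, mul_zero, sub_zero]
      have hj₀zero : ω' j₀ = 0 := by
        simp only [hω'def, hlamdef]
        rw [div_mul_cancel₀ _ (ne_of_gt (hcpos j₀ hj₀J))]
        ring
      have hj₀mem : j₀ ∈ Finset.univ.filter (fun j => ω j ≠ 0) := by
        rw [Finset.mem_filter]
        exact ⟨Finset.mem_univ _, ne_of_gt (hJpos j₀ hj₀J)⟩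
      have hsub : Finset.univ.filter (fun j => ω' j ≠ 0)
          ⊆ (Finset.univ.filter (fun j => ω j ≠ 0)).erase j₀ := by
        intro j hj
        rw [Finset.mem_filter] at hj
        rw [Finset.mem_erase, Finset.mem_filter]
        refine ⟨fun hc => hj.2 (hc ▸ hj₀zero), Finset.mem_univ _, fun hc => hj.2 ?_⟩
        have hjJ : j ∉ J := fun hjJ => (ne_of_gt (hJpos j hjJ)) hc
        simp only [hω'def, circuitR, if_neg hjJ, mul_zero, sub_zero]
        exact hc
      have hcard' : (Finset.univ.filter (fun j => ω' j ≠ 0)).card < N := by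
        calc (Finset.univ.filter (fun j => ω' j ≠ 0)).card
            ≤ ((Finset.univ.filter (fun j => ω j ≠ 0)).erase j₀).card :=
              Finset.card_le_card hsub
          _ < (Finset.univ.filter (fun j => ω j ≠ 0)).card := by
              rw [Finset.card_erase_of_mem hj₀mem]
              have : 0 < (Finset.univ.filter (fun j => ω j ≠ 0)).card :=
                Finset.card_pos.mpr ⟨j₀, hj₀mem⟩
              omega
          _ = N := hN
      obtain ⟨t', ht'0, ht'good, ht'sum⟩ := ih _ hcard' ω' rfl hω'mom hω'pos
      refine ⟨fun K => if K = J then t' K + lam else t' K, ?_, ?_, ?_⟩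
      · intro K
        by_cases hK : K = J
        · simp only [if_pos hK]; have := ht'0 K; linarith
        · simp only [if_neg hK]; exact ht'0 K
      · intro K hK
        by_cases hKJ : K = J
        · subst hKJ; exact ⟨hJcard, hJbands⟩
        · simp only [if_neg hKJ] at hK
          exact ht'good K hK
      · funext j
        have key : (∑ K : Finset (Fin n),
            (if K = J then t' K + lam else t' K) • circuitR n m x y K) j
            = (∑ K : Finset (Fin n), t' K • circuitR n m x y K) j
              + lam * circuitR n m x y J j := by
          rw [Finset.sum_apply, Finset.sum_apply]
          have hterm : ∀ K : Finset (Fin n),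
              ((if K = J then t' K + lam else t' K) • circuitR n m x y K) j
              = (t' K • circuitR n m x y K) j
                + (if K = J then lam * circuitR n m x y K j else 0) := by
            intro K
            by_cases hK : K = J
            · rw [if_pos hK, if_pos hK]
              simp only [Pi.smul_apply, smul_eq_mul]
              ring
            · rw [if_neg hK, if_neg hK]
              simp only [Pi.smul_apply, smul_eq_mul]
              ring
          rw [Finset.sum_congr rfl (fun K _ => hterm K), Finset.sum_add_distrib,
            Finset.sum_ite_eq' Finset.univ J
              (fun K => lam * circuitR n m x y K j)]
          simp
        rw [key, ← ht'sum]
        simp only [hω'def]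
        ring
end Main

/-- under strict interlacing, the set
`W_{≥0} = {ω : system holds and ω ≥ 0}` equals the cone generated by the circuit vectors
`ω^{(J)}` with `J ∈ 𝔍₊` (i.e. `|J| = m+1` and `|J ∩ I_r| = 1` for every band `I_r`).
A nonnegative combination is encoded by coefficients `t : Finset (Fin n) → ℝ`, `t ≥ 0`,
supported on `𝔍₊`. -/
theorem stmt_5 (m n : ℕ) (hm : 1 ≤ m) (hmn : m < n)
    (x y : ℕ → ℝ)
    (hx : ∀ j j', 1 ≤ j → j < j' → j' ≤ n → x j < x j')
    (hy : ∀ k k', 1 ≤ k → k < k' → k' ≤ m → y k < y k')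
    (hxy : ∀ j k, 1 ≤ j → j ≤ n → 1 ≤ k → k ≤ m → x j ≠ y k)
    (i : ℕ → ℕ) (hi0 : i 0 = 0) (hin : i (m + 1) = n)
    (himono : ∀ r, r ≤ m → i r < i (r + 1))
    (hinter : ∀ k, 1 ≤ k → k ≤ m → x (i k) < y k ∧ y k < x (i k + 1)) :
    {ω : Fin n → ℝ |
        (∀ k, k < m →
          ∑ j : Fin n, ω j * Pm m y (x ((j : ℕ) + 1)) * x ((j : ℕ) + 1) ^ k = 0) ∧
        ∀ j : Fin n, 0 ≤ ω j}
      = {ω : Fin n → ℝ |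
          ∃ t : Finset (Fin n) → ℝ,
            (∀ J, 0 ≤ t J) ∧
            (∀ J, t J ≠ 0 →
              J.card = m + 1 ∧ ∀ r, r ≤ m → (J ∩ bandR n i r).card = 1) ∧
            ω = ∑ J : Finset (Fin n), t J • circuitR n m x y J} := by
  classical
  ext ω
  simp only [Set.mem_setOf_eq]
  constructor
  · rintro ⟨hmom, hpos⟩
    exact cone_of_mem hm hmn hx hxy hi0 hin himono hinter _ ω rfl hmom hpos
  · rintro ⟨t, ht0, htgood, rfl⟩
    constructor
    · intro k hk
      calc ∑ j : Fin n, (∑ K : Finset (Fin n), t K • circuitR n m x y K) j *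
            Pm m y (x ((j:ℕ)+1)) * x ((j:ℕ)+1) ^ k
          = ∑ j : Fin n, ∑ K : Finset (Fin n),
              t K * (circuitR n m x y K j * Pm m y (x ((j:ℕ)+1)) * x ((j:ℕ)+1) ^ k) := by
            refine Finset.sum_congr rfl (fun j _ => ?_)
            rw [Finset.sum_apply, Finset.sum_mul, Finset.sum_mul]
            refine Finset.sum_congr rfl (fun K _ => ?_)
            simp only [Pi.smul_apply, smul_eq_mul]
            ring
        _ = ∑ K : Finset (Fin n), t K * ∑ j : Fin n,
              circuitR n m x y K j * Pm m y (x ((j:ℕ)+1)) * x ((j:ℕ)+1) ^ k := by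
            rw [Finset.sum_comm]
            exact Finset.sum_congr rfl (fun K _ => (Finset.mul_sum _ _ _).symm)
        _ = 0 := Finset.sum_eq_zero (fun K _ => by
            by_cases hK : t K = 0
            · rw [hK, zero_mul]
            · rw [circuit_moment hx hxy K (htgood K hK).1 hk, mul_zero])
    · intro j
      rw [Finset.sum_apply]
      refine Finset.sum_nonneg (fun K _ => ?_)
      simp only [Pi.smul_apply, smul_eq_mul]
      by_cases hK : t K = 0
      · rw [hK, zero_mul]
      · exact mul_nonneg (ht0 K)
          (circuit_nonneg hx hxy himono hi0 hin hinter (htgood K hK).2 j)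
end

section
/- Assume {y_k}_{k=1}^m strictly interlaces {x_j}_{j=1}^n. Then there exist real numbers ω_1,…,ω_n with ω_j > 0 for every j such that ∑_{j=1}^n ω_j P_m(x_j) x_j^k = 0 for every k = 0,…,m−1. -/
/-- `{y_k}_{k=1}^m` strictly interlaces `{x_j}_{j=1}^n`: there are integers
`0 = i_0 < i_1 < ⋯ < i_m < i_{m+1} = n` with `x_{i_k} < y_k < x_{i_k + 1}` for `k = 1,…,m`
(1-based indexing of the sequences `x`, `y`). -/
def StrictlyInterlacesR (n m : ℕ) (x y : ℕ → ℝ) : Prop :=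
  ∃ i : ℕ → ℕ, i 0 = 0 ∧ i (m + 1) = n ∧ (∀ r, r ≤ m → i r < i (r + 1)) ∧
    ∀ k, 1 ≤ k → k ≤ m → x (i k) < y k ∧ y k < x (i k + 1)

open Finset Polynomial

lemma neg_one_pow_card_filter_neg_mul_prod_pos {ι R : Type*} [CommRing R] [LinearOrder R]
    [IsStrictOrderedRing R] (s : Finset ι) {f : ι → R} (hf : ∀ i ∈ s, f i ≠ 0) :
    0 < (-1) ^ #{i ∈ s | f i < 0} * ∏ i ∈ s, f i := by
  classical
  rw [← prod_filter_mul_prod_filter_not s (fun i => f i < 0), ← mul_assoc, ← prod_neg]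
  refine mul_pos (prod_pos fun i hi => neg_pos.2 (mem_filter.1 hi).2) (prod_pos fun i hi => ?_)
  obtain ⟨hs, hneg⟩ := mem_filter.1 hi
  exact (not_lt.1 hneg).lt_of_ne' (hf i hs)

lemma Lagrange.sum_nodalWeight_mul_eval_eq_zero {F ι : Type*} [Field F] [DecidableEq ι]
    {s : Finset ι} {v : ι → F} (hvs : Set.InjOn v s) {f : F[X]} (hf : f.degree < ↑(#s - 1)) :
    ∑ i ∈ s, nodalWeight s v i * f.eval (v i) = 0 := by
  have hcoeff : f.coeff (#s - 1) = 0 := coeff_eq_zero_of_degree_lt hf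
  rw [eq_interpolate hvs (hf.trans_le (by exact_mod_cast Nat.sub_le _ _)), interpolate_apply,
    finsetSum_coeff] at hcoeff
  rw [← hcoeff]
  refine sum_congr rfl fun i hi => ?_
  rw [coeff_C_mul, ← natDegree_basis hvs hi, ← leadingCoeff, leadingCoeff_basis hvs hi,
    nodalWeight, prod_inv_distrib, mul_comm]

lemma Lagrange.neg_one_pow_mul_nodalWeight_pos {ι R : Type*} [LinearOrder ι] [Field R]
    [LinearOrder R] [IsStrictOrderedRing R] {s : Finset ι} {v : ι → R} (hv : StrictMonoOn v s)
    {i : ι} (hi : i ∈ s) :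
    0 < (-1) ^ #{j ∈ s | i < j} * nodalWeight s v i := by
  have hfilter : {j ∈ s.erase i | (v i - v j)⁻¹ < 0} = {j ∈ s | i < j} := by
    ext j
    simp only [mem_filter, mem_erase, inv_lt_zero, sub_neg]
    constructor
    · rintro ⟨⟨-, hj⟩, hlt⟩
      exact ⟨hj, hv.lt_iff_lt hi hj |>.1 hlt⟩
    · rintro ⟨hj, hlt⟩
      exact ⟨⟨hlt.ne', hj⟩, hv hi hj hlt⟩
  rw [nodalWeight, ← hfilter]
  refine neg_one_pow_card_filter_neg_mul_prod_pos _ fun j hj => ?_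
  obtain ⟨hji, hj⟩ := mem_erase.1 hj
  exact inv_ne_zero (sub_ne_zero.2 (hv.injOn.ne hi hj hji.symm))

lemma exists_pos_weights_of_alternating {m : ℕ} {z : Fin (m + 1) → ℝ} (hz : StrictMono z)
    {a : Fin (m + 1) → ℝ} (ha : ∀ k : Fin (m + 1), 0 < (-1) ^ (m - k : ℕ) * a k) :
    ∃ w : Fin (m + 1) → ℝ, (∀ k, 0 < w k) ∧ ∀ p < m, ∑ k, w k * (a k * z k ^ p) = 0 := by
  have hsign : ∀ k : Fin (m + 1), 0 < (-1) ^ (m - k : ℕ) * Lagrange.nodalWeight univ z k := by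
    intro k
    simpa [filter_lt_eq_Ioi] using
      Lagrange.neg_one_pow_mul_nodalWeight_pos (fun _ _ _ _ h => hz h) (mem_univ k)
  refine ⟨fun k => Lagrange.nodalWeight univ z k / a k, fun k => ?_, fun p hp => ?_⟩
  · have hpow : ((-1 : ℝ) ^ (m - k : ℕ)) ≠ 0 := pow_ne_zero _ (by norm_num)
    simpa only [mul_div_mul_left _ _ hpow] using div_pos (hsign k) (ha k)
  · have ha0 : ∀ k, a k ≠ 0 := fun k h => by simpa [h] using ha k
    have hdeg : (X ^ p : ℝ[X]).degree < ↑(#(univ : Finset (Fin (m + 1))) - 1) := by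
      rw [degree_X_pow, card_univ, Fintype.card_fin, Nat.add_sub_cancel]
      exact_mod_cast hp
    rw [← Lagrange.sum_nodalWeight_mul_eval_eq_zero hz.injective.injOn hdeg]
    refine sum_congr rfl fun k _ => ?_
    rw [eval_pow, eval_X]
    field_simp [ha0 k]

lemma exists_pos_weights_of_covering {ι κ α : Type*} [Fintype ι] [DecidableEq ι] [Fintype κ]
    (G : α → ι → ℝ)
    (h : ∀ t, ∃ (z : κ → ι) (w : κ → ℝ), (∀ k, 0 < w k) ∧ t ∈ Set.range z ∧
      ∀ a, ∑ k, w k * G a (z k) = 0) :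
    ∃ ω : ι → ℝ, (∀ t, 0 < ω t) ∧ ∀ a, ∑ t, ω t * G a t = 0 := by
  choose z w hw hz hG using h
  have hterm : ∀ s k t, 0 ≤ if z s k = t then w s k else 0 := fun s k t => by
    split_ifs <;> simp [(hw s k).le]
  refine ⟨fun t => ∑ s, ∑ k, if z s k = t then w s k else 0, fun t => ?_, fun a => ?_⟩
  · obtain ⟨k, hk⟩ := hz t
    refine sum_pos' (fun s _ => sum_nonneg fun k _ => hterm s k t) ⟨t, mem_univ t, ?_⟩
    exact sum_pos' (fun k _ => hterm t k t) ⟨k, mem_univ k, by simp [hk, hw]⟩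
  · calc ∑ t, (∑ s, ∑ k, if z s k = t then w s k else 0) * G a t
        = ∑ s, ∑ k, ∑ t, if z s k = t then w s k * G a t else 0 := by
          simp only [sum_mul, ite_mul, zero_mul]
          rw [sum_comm]
          exact sum_congr rfl fun s _ => sum_comm
      _ = 0 := by simp [hG]

lemma exists_strictMono_block_transversal {m : ℕ} {i : ℕ → ℕ}
    (hi : StrictMonoOn i (Set.Iic (m + 1))) {t : ℕ} (ht₀ : i 0 ≤ t) (ht : t < i (m + 1)) :
    ∃ c : Fin (m + 1) → ℕ, StrictMono c ∧ (∀ k : Fin (m + 1), i k ≤ c k ∧ c k < i (k + 1)) ∧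
      t ∈ Set.range c := by
  have hex : ∃ k, t < i (k + 1) := ⟨m, ht⟩
  set K := Nat.find hex
  have hK : K ≤ m := Nat.find_min' hex ht
  have hKt : i K ≤ t := by
    rcases Nat.eq_zero_or_eq_succ_pred K with h | h
    · rwa [h]
    · rw [h]; exact not_lt.1 (Nat.find_min hex (by omega))
  have hstep : ∀ k ≤ m, i k < i (k + 1) := fun k hk =>
    hi (by simp only [Set.mem_Iic]; omega) (by simp only [Set.mem_Iic]; omega) (Nat.lt_succ_self k)
  let c : Fin (m + 1) → ℕ := fun k => if (k : ℕ) = K then t else i k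
  have hblock : ∀ k : Fin (m + 1), i k ≤ c k ∧ c k < i (k + 1) := fun k => by
    simp only [c]
    split_ifs with h
    · exact ⟨h ▸ hKt, h ▸ Nat.find_spec hex⟩
    · exact ⟨le_rfl, hstep k (by omega)⟩
  refine ⟨c, fun k l hkl => ?_, hblock, ⟨⟨K, by omega⟩, if_pos rfl⟩⟩
  calc _ < i (k + 1) := (hblock k).2
    _ ≤ i l := hi.monotoneOn (by simp only [Set.mem_Iic]; omega) (by simp only [Set.mem_Iic]; omega)
      (by simpa using hkl)
    _ ≤ _ := (hblock l).1

lemma neg_one_pow_mul_Pm_pos {m k : ℕ} {y : ℕ → ℝ} {s : ℝ}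
    (hlow : ∀ r ∈ Icc 1 k, y r < s) (hhigh : ∀ r ∈ Ioc k m, s < y r) :
    0 < (-1) ^ (m - k) * Pm m y s := by
  have hfilter : {r ∈ Icc 1 m | s - y r < 0} = Ioc k m := by
    ext r
    simp only [mem_filter, mem_Icc, mem_Ioc, sub_neg]
    constructor
    · rintro ⟨⟨h1, hm⟩, hlt⟩
      refine ⟨not_le.1 fun hrk => ?_, hm⟩
      exact (hlow r (mem_Icc.2 ⟨h1, hrk⟩)).not_gt hlt
    · rintro ⟨hkr, hm⟩
      exact ⟨⟨by omega, hm⟩, hhigh r (mem_Ioc.2 ⟨hkr, hm⟩)⟩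
  rw [← Nat.card_Ioc, ← hfilter, Pm]
  refine neg_one_pow_card_filter_neg_mul_prod_pos _ fun r hr => sub_ne_zero.2 fun h => ?_
  obtain ⟨h1, hm⟩ := mem_Icc.1 hr
  rcases le_or_gt r k with hrk | hrk
  · exact (hlow r (mem_Icc.2 ⟨h1, hrk⟩)).ne' h
  · exact (hhigh r (mem_Ioc.2 ⟨hrk, hm⟩)).ne h

lemma neg_one_pow_mul_Pm_pos_of_mem_block {m n : ℕ} {x y : ℕ → ℝ} {i : ℕ → ℕ}
    (hx : MonotoneOn x (Set.Icc 1 n)) (hi : MonotoneOn i (Set.Iic (m + 1))) (hin : i (m + 1) = n)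
    (hib : ∀ k, 1 ≤ k → k ≤ m → x (i k) < y k ∧ y k < x (i k + 1))
    {k t : ℕ} (hk : k ≤ m) (hkt : i k ≤ t) (htk : t < i (k + 1)) :
    0 < (-1) ^ (m - k) * Pm m y (x (t + 1)) := by
  have hile : ∀ a b, a ≤ b → b ≤ m + 1 → i a ≤ i b := fun a b hab hb =>
    hi (Set.mem_Iic.2 (hab.trans hb)) (Set.mem_Iic.2 hb) hab
  have hxle : ∀ a b, 1 ≤ a → a ≤ b → b ≤ n → x a ≤ x b := fun a b ha hab hb =>
    hx ⟨ha, hab.trans hb⟩ ⟨ha.trans hab, hb⟩ hab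
  have htn : t + 1 ≤ n := hin ▸ htk.trans_le (hile _ _ (by omega) le_rfl)
  refine neg_one_pow_mul_Pm_pos (fun r hr => ?_) (fun r hr => ?_)
  · obtain ⟨h1, hrk⟩ := mem_Icc.1 hr
    have hirk := hile r k hrk (by omega)
    exact (hib r h1 (hrk.trans hk)).2.trans_le (hxle _ _ (by omega) (by omega) htn)
  · obtain ⟨hkr, hrm⟩ := mem_Ioc.1 hr
    have hikr := hile (k + 1) r hkr (by omega)
    have hirn := hin ▸ hile r (m + 1) (by omega) le_rfl
    exact (hxle _ _ (by omega) (by omega) hirn).trans_lt (hib r (by omega) hrm).1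

theorem stmt_6_general (m n : ℕ)
    (x y : ℕ → ℝ)
    (hx : ∀ j j', 1 ≤ j → j < j' → j' ≤ n → x j < x j')
    (hint : StrictlyInterlacesR n m x y) :
    ∃ ω : Fin n → ℝ, (∀ j, 0 < ω j) ∧
      ∀ k, k < m →
        ∑ j : Fin n, ω j * Pm m y (x ((j : ℕ) + 1)) * x ((j : ℕ) + 1) ^ k = 0 := by
  obtain ⟨i, hi0, hin, hinc, hib⟩ := hint
  have hi : StrictMonoOn i (Set.Iic (m + 1)) :=
    strictMonoOn_Iic_of_lt_succ fun r hr => hinc r (Nat.lt_succ_iff.1 hr)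
  have hxm : StrictMonoOn x (Set.Icc 1 n) := fun a ha b hb hab => hx a b ha.1 hab hb.2
  obtain ⟨ω, hω, horth⟩ := exists_pos_weights_of_covering (κ := Fin (m + 1))
    (fun (p : Fin m) (t : Fin n) => Pm m y (x (t + 1)) * x (t + 1) ^ (p : ℕ)) fun t => by
      obtain ⟨c, hc, hblock, k, hk⟩ :=
        exists_strictMono_block_transversal hi (hi0 ▸ Nat.zero_le t) (hin ▸ t.isLt)
      have hcn : ∀ k, c k < n := fun k => hin ▸ (hblock k).2.trans_le
        (hi.monotoneOn (by simp only [Set.mem_Iic]; omega) (by simp) (by omega))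
      obtain ⟨w, hw, hsum⟩ := exists_pos_weights_of_alternating (z := fun k => x (c k + 1))
        (fun k l hkl => hxm ⟨by omega, hcn k⟩ ⟨by omega, hcn l⟩ (by simpa using hc hkl))
        (fun k => neg_one_pow_mul_Pm_pos_of_mem_block hxm.monotoneOn hi.monotoneOn hin hib
          (by omega) (hblock k).1 (hblock k).2)
      exact ⟨fun k => ⟨c k, hcn k⟩, w, hw, ⟨k, Fin.ext hk⟩, fun p => hsum p p.2⟩
  exact ⟨ω, hω, fun k hk => by simpa only [mul_assoc] using horth ⟨k, hk⟩⟩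

/-- if `{y_k}` strictly interlaces `{x_j}`, then there exist strictly positive
weights `ω_1,…,ω_n` with `∑_j ω_j P_m(x_j) x_j^k = 0` for every `k = 0,…,m-1`. -/
theorem stmt_6 (m n : ℕ) (hm : 1 ≤ m) (hmn : m < n)
    (x y : ℕ → ℝ)
    (hx : ∀ j j', 1 ≤ j → j < j' → j' ≤ n → x j < x j')
    (hy : ∀ k k', 1 ≤ k → k < k' → k' ≤ m → y k < y k')
    (hxy : ∀ j k, 1 ≤ j → j ≤ n → 1 ≤ k → k ≤ m → x j ≠ y k)
    (hint : StrictlyInterlacesR n m x y) :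
    ∃ ω : Fin n → ℝ, (∀ j, 0 < ω j) ∧
      ∀ k, k < m →
        ∑ j : Fin n, ω j * Pm m y (x ((j : ℕ) + 1)) * x ((j : ℕ) + 1) ^ k = 0 :=
  stmt_6_general m n x y hx hint
end

section
/- There exists a positive Borel measure μ on ℝ of the form μ = ∑_{j=1}^n ω_j δ_{x_j} with ω_j > 0 for every j (δ_x denoting the unit point mass at x) such that ∫ P_m(x) x^k dμ(x) = 0 for every k = 0,…,m−1, if and only if {y_k}_{k=1}^m strictly interlaces {x_j}_{j=1}^n. -/
/-!
Put `a_j = ω_j P_m(x_j)`. The moment conditions say that `a` annihilates every polynomial of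
degree `< m` on the nodes `x_j`, and `ω_j > 0` says that `a_j` has the sign of `P_m(x_j)`,
namely `(-1)^#{k | x_j < y_k}`.

If some gap `(y_r, y_{r+1})` (with `y_0 = -∞`, `y_{m+1} = +∞`) contains no `x_j`, write
`P_m = q · L` where `L` is the product of the one or two factors `t - y_k` bounding that gap.
Then `deg q < m` and `L` has constant sign at every node, so `∑ a_j q(x_j) = ∑ ω_j q(x_j)² L(x_j)`
cannot vanish. Conversely, if every gap contains a node, pick nodes `z_0 < ⋯ < z_m`, one per gap.
The divided-difference weights `1 / ∏_{s ≠ r} (z_r - z_s)` annihilate polynomials of degree `< m`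
and have sign `(-1)^(m-r)`, which is the sign of `P_m(z_r)`. Summing these functionals over
node choices passing through each `x_j` gives an admissible `a`.
-/

open MeasureTheory

open Finset Polynomial

theorem Finset.prod_abs_eq_neg_one_pow_mul_prod {ι R : Type*} [CommRing R] [LinearOrder R]
    [IsStrictOrderedRing R] (s : Finset ι) (f : ι → R) :
    ∏ i ∈ s, |f i| = (-1) ^ #{i ∈ s | f i < 0} * ∏ i ∈ s, f i := by
  classical
  calc ∏ i ∈ s, |f i| = ∏ i ∈ s, if f i < 0 then -f i else f i :=
        prod_congr rfl fun i _ => by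
          split_ifs with h
          exacts [abs_of_neg h, abs_of_nonneg (not_lt.1 h)]
    _ = (-1) ^ #{i ∈ s | f i < 0} * ∏ i ∈ s, f i := by
        rw [prod_ite, prod_neg, mul_assoc, prod_filter_mul_prod_filter_not]

theorem Polynomial.sum_mul_eval_eq_zero_of_natDegree_lt {ι R : Type*} [CommRing R] {m : ℕ}
    (s : Finset ι) (a x : ι → R) (h : ∀ k < m, ∑ j ∈ s, a j * x j ^ k = 0) {p : R[X]}
    (hp : p.natDegree < m) : ∑ j ∈ s, a j * p.eval (x j) = 0 := by
  simp_rw [eval_eq_sum_range' hp, mul_sum]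
  rw [sum_comm]
  refine sum_eq_zero fun k hk => ?_
  simp_rw [mul_left_comm (a _), ← mul_sum]
  rw [h k (mem_range.1 hk), mul_zero]

theorem Lagrange.sum_pow_div_prod_sub_eq_zero {ι F : Type*} [Field F] [DecidableEq ι]
    {s : Finset ι} {z : ι → F} (hz : Set.InjOn z s) {k : ℕ} (hk : k + 1 < #s) :
    ∑ i ∈ s, z i ^ k / ∏ j ∈ s.erase i, (z i - z j) = 0 := by
  have h := Lagrange.coeff_eq_sum hz (P := X ^ k) (by rw [degree_X_pow]; exact_mod_cast (by omega))
  simpa [coeff_X_pow, show #s - 1 ≠ k by omega] using h.symm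

theorem MeasureTheory.integral_sum_smul_dirac {α ι : Type*} [MeasurableSpace α]
    [MeasurableSingletonClass α] (s : Finset ι) {w : ι → ℝ} (hw : ∀ j ∈ s, 0 ≤ w j) (x : ι → α)
    (f : α → ℝ) :
    ∫ t, f t ∂(∑ j ∈ s, ENNReal.ofReal (w j) • Measure.dirac (x j)) = ∑ j ∈ s, w j * f (x j) := by
  have hint : ∀ j ∈ s, Integrable f (ENNReal.ofReal (w j) • Measure.dirac (x j)) := fun j _ =>
    ((integrable_const (f (x j))).congr (ae_eq_dirac f).symm).smul_measure ENNReal.ofReal_ne_top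
  rw [integral_finsetSum_measure hint]
  refine sum_congr rfl fun j hj => ?_
  rw [integral_smul_measure, integral_dirac, ENNReal.toReal_ofReal (hw j hj), smul_eq_mul]

section NumAbove

variable {m : ℕ} {y : ℕ → ℝ}

/-- `(-1) ^ numAbove m y t` is the sign of `P_m(t)`, and `numAbove m y t + r = m` says that `t`
lies in the `r`-th gap `(y_r, y_{r+1})`, where `y_0 = -∞` and `y_{m+1} = +∞`. -/
noncomputable def numAbove (m : ℕ) (y : ℕ → ℝ) (t : ℝ) : ℕ := #{k ∈ Icc 1 m | t < y k}

theorem numAbove_le (t : ℝ) : numAbove m y t ≤ m :=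
  (card_filter_le _ _).trans (by simp)

theorem numAbove_antitone : Antitone (numAbove m y) := fun _ _ hst =>
  card_le_card (monotone_filter_right _ fun _ _ h => hst.trans_lt h)

theorem abs_Pm (t : ℝ) : |Pm m y t| = (-1) ^ numAbove m y t * Pm m y t := by
  simp_rw [Pm, abs_prod, prod_abs_eq_neg_one_pow_mul_prod, sub_neg, numAbove]

theorem Pm_ne_zero_s10 {t : ℝ} (ht : ∀ k ∈ Icc 1 m, t ≠ y k) : Pm m y t ≠ 0 :=
  prod_ne_zero_iff.2 fun k hk => sub_ne_zero.2 (ht k hk)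

theorem lt_iff_le_numAbove_add (hy : StrictMonoOn y (Set.Icc 1 m)) {t : ℝ}
    (ht : ∀ k ∈ Icc 1 m, t ≠ y k) {k : ℕ} (hk : k ∈ Icc 1 m) :
    t < y k ↔ m + 1 ≤ numAbove m y t + k := by
  have hk' := mem_Icc.1 hk
  constructor
  · intro htk
    have : Icc k m ⊆ {k' ∈ Icc 1 m | t < y k'} := fun k' hk'' => by
      have := mem_Icc.1 hk''
      refine mem_filter.2 ⟨mem_Icc.2 ⟨by omega, this.2⟩, htk.trans_le ?_⟩
      exact (hy.le_iff_le (by simpa using hk') (by simp; omega)).2 this.1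
    have := card_le_card this
    simp only [Nat.card_Icc] at this
    rw [numAbove]
    omega
  · intro hle
    by_contra htk
    have hyt : y k < t := lt_of_le_of_ne (not_lt.1 htk) (ht k hk).symm
    have : {k' ∈ Icc 1 m | t < y k'} ⊆ Ioc k m := fun k' hk'' => by
      obtain ⟨hk'm, htk'⟩ := mem_filter.1 hk''
      have := mem_Icc.1 hk'm
      refine mem_Ioc.2 ⟨?_, this.2⟩
      by_contra hkk
      exact (hy.le_iff_le (by simpa using this) (by simpa using hk')).2 (not_lt.1 hkk)
        |>.trans_lt hyt |>.trans htk' |>.false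
    have := card_le_card this
    simp only [Nat.card_Ioc] at this
    rw [numAbove] at hle
    omega

theorem numAbove_add_eq (hy : StrictMonoOn y (Set.Icc 1 m)) {t : ℝ}
    (ht : ∀ k ∈ Icc 1 m, t ≠ y k) {r : ℕ} (hr : r ≤ m) (hlow : 1 ≤ r → y r < t)
    (hhigh : r < m → t < y (r + 1)) : numAbove m y t + r = m := by
  have hup : m ≤ numAbove m y t + r := by
    rcases hr.lt_or_eq with hr | rfl
    · have := (lt_iff_le_numAbove_add hy ht (mem_Icc.2 ⟨by omega, hr⟩)).1 (hhigh hr)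
      omega
    · omega
  have hdown : numAbove m y t + r ≤ m := by
    rcases Nat.eq_zero_or_pos r with rfl | hr0
    · simpa using numAbove_le t
    · have := (lt_iff_le_numAbove_add hy ht (mem_Icc.2 ⟨hr0, hr⟩)).not.1
        (not_lt.2 (hlow hr0).le)
      omega
  omega

theorem strictMonoOn_of_numAbove_add_eq {z : ℕ → ℝ}
    (hz : ∀ r ≤ m, numAbove m y (z r) + r = m) : StrictMonoOn z (Set.Iic m) :=
  fun a ha b hb hab => by
    by_contra hba
    have := numAbove_antitone (m := m) (y := y) (not_lt.1 hba)
    have := hz a ha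
    have := hz b hb
    omega

theorem Pm_div_prod_sub_pos {z : ℕ → ℝ} (hz : ∀ r ≤ m, numAbove m y (z r) + r = m)
    (hzy : ∀ r ≤ m, ∀ k ∈ Icc 1 m, z r ≠ y k) {r : ℕ} (hr : r ≤ m) :
    0 < Pm m y (z r) / ∏ s ∈ (range (m + 1)).erase r, (z r - z s) := by
  have hmono := strictMonoOn_of_numAbove_add_eq hz
  have hsign : #{s ∈ (range (m + 1)).erase r | z r - z s < 0} = m - r := by
    rw [← Nat.card_Ioc r m]
    congr 1
    ext s
    simp only [mem_filter, mem_erase, mem_range, mem_Ioc, sub_neg]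
    constructor
    · rintro ⟨⟨hsr, hs⟩, hlt⟩
      exact ⟨(hmono.lt_iff_lt (Set.mem_Iic.2 hr) (Set.mem_Iic.2 (by omega))).1 hlt, by omega⟩
    · rintro ⟨hrs, hs⟩
      exact ⟨⟨by omega, by omega⟩, hmono (Set.mem_Iic.2 hr) (Set.mem_Iic.2 hs) hrs⟩
  have hD : |∏ s ∈ (range (m + 1)).erase r, (z r - z s)|
      = (-1) ^ (m - r) * ∏ s ∈ (range (m + 1)).erase r, (z r - z s) := by
    rw [abs_prod, prod_abs_eq_neg_one_pow_mul_prod, hsign]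
  have hP : |Pm m y (z r)| = (-1) ^ (m - r) * Pm m y (z r) := by
    rw [abs_Pm, (Nat.sub_eq_of_eq_add (hz r hr).symm).symm]
  have hD0 : ∏ s ∈ (range (m + 1)).erase r, (z r - z s) ≠ 0 :=
    prod_ne_zero_iff.2 fun s hs => sub_ne_zero.2 (hmono.injOn.ne (Set.mem_Iic.2 hr)
      (Set.mem_Iic.2 (by simp at hs; omega)) (mem_erase.1 hs).1.symm)
  rw [← mul_div_mul_left _ _ (pow_ne_zero (m - r) (neg_ne_zero.2 one_ne_zero)), ← hP, ← hD]
  exact div_pos (abs_pos.2 (Pm_ne_zero_s10 (hzy r hr))) (abs_pos.2 hD0)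

end NumAbove

section DivDiff

variable {ι : Type*} [DecidableEq ι] {m : ℕ}

/-- The divided difference at the nodes `z (e 0), …, z (e m)`, as a weight on `ι`. -/
noncomputable def divDiffWeight (m : ℕ) (z : ι → ℝ) (e : ℕ → ι) (l : ι) : ℝ :=
  ∑ r ∈ range (m + 1),
    if e r = l then (∏ t ∈ (range (m + 1)).erase r, (z (e r) - z (e t)))⁻¹ else 0

theorem sum_divDiffWeight_mul_pow_eq_zero {s : Finset ι} {z : ι → ℝ} {e : ℕ → ι}
    (he : ∀ r ≤ m, e r ∈ s) (hinj : Set.InjOn (z ∘ e) (range (m + 1))) {k : ℕ} (hk : k < m) :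
    ∑ l ∈ s, divDiffWeight m z e l * z l ^ k = 0 := by
  simp_rw [divDiffWeight, sum_mul, ite_mul, zero_mul]
  rw [sum_comm]
  refine (sum_congr rfl fun r hr => ?_).trans
    (Lagrange.sum_pow_div_prod_sub_eq_zero hinj (k := k) (by simpa using hk))
  rw [sum_ite_eq, if_pos (he r (Nat.lt_succ_iff.1 (mem_range.1 hr))), inv_mul_eq_div]
  rfl

variable {y : ℕ → ℝ} {z : ι → ℝ} {e : ℕ → ι}

theorem divDiffWeight_mul_Pm (l : ι) :
    divDiffWeight m z e l * Pm m y (z l) = ∑ r ∈ range (m + 1),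
      if e r = l then Pm m y (z (e r)) / ∏ t ∈ (range (m + 1)).erase r, (z (e r) - z (e t))
      else 0 := by
  rw [divDiffWeight, sum_mul]
  refine sum_congr rfl fun r _ => ?_
  split_ifs with h
  · rw [h, inv_mul_eq_div]
  · rw [zero_mul]

theorem divDiffWeight_mul_Pm_nonneg (hz : ∀ r ≤ m, numAbove m y (z (e r)) + r = m)
    (hzy : ∀ r ≤ m, ∀ k ∈ Icc 1 m, z (e r) ≠ y k) (l : ι) :
    0 ≤ divDiffWeight m z e l * Pm m y (z l) := by
  rw [divDiffWeight_mul_Pm]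
  exact sum_nonneg fun r hr => ite_nonneg
    (Pm_div_prod_sub_pos (z := z ∘ e) hz hzy (Nat.lt_succ_iff.1 (mem_range.1 hr))).le le_rfl

theorem divDiffWeight_mul_Pm_pos (hz : ∀ r ≤ m, numAbove m y (z (e r)) + r = m)
    (hzy : ∀ r ≤ m, ∀ k ∈ Icc 1 m, z (e r) ≠ y k) {r : ℕ} (hr : r ≤ m) :
    0 < divDiffWeight m z e (e r) * Pm m y (z (e r)) := by
  have hpos : ∀ t ∈ range (m + 1),
      0 < Pm m y (z (e t)) / ∏ u ∈ (range (m + 1)).erase t, (z (e t) - z (e u)) :=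
    fun t ht => Pm_div_prod_sub_pos (z := z ∘ e) hz hzy (Nat.lt_succ_iff.1 (mem_range.1 ht))
  rw [divDiffWeight_mul_Pm]
  refine sum_pos' (fun t ht => ite_nonneg (hpos t ht).le le_rfl)
    ⟨r, mem_range.2 (Nat.lt_succ_of_le hr), ?_⟩
  rw [if_pos rfl]
  exact hpos r (mem_range.2 (Nat.lt_succ_of_le hr))

end DivDiff

section Orthogonality

variable {ι : Type*} {m : ℕ} {y : ℕ → ℝ} {s : Finset ι} {x : ι → ℝ}

theorem exists_nodes_through (hgap : ∀ r ≤ m, ∃ j ∈ s, numAbove m y (x j) + r = m) {j : ι}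
    (hj : j ∈ s) : ∃ e : ℕ → ι, e (m - numAbove m y (x j)) = j ∧
      ∀ r ≤ m, e r ∈ s ∧ numAbove m y (x (e r)) + r = m := by
  classical
  have : Nonempty ι := ⟨j⟩
  choose! b hb_mem hb using hgap
  refine ⟨Function.update b (m - numAbove m y (x j)) j, Function.update_self .., fun r hr => ?_⟩
  by_cases hrj : r = m - numAbove m y (x j)
  · have := numAbove_le (m := m) (y := y) (x j)
    rw [hrj, Function.update_self]
    exact ⟨hj, by omega⟩
  · rw [Function.update_of_ne hrj]
    exact ⟨hb_mem r hr, hb r hr⟩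

theorem exists_pos_weights_orthogonal (hxy : ∀ j ∈ s, ∀ k ∈ Icc 1 m, x j ≠ y k)
    (hgap : ∀ r ≤ m, ∃ j ∈ s, numAbove m y (x j) + r = m) :
    ∃ ω : ι → ℝ, (∀ j ∈ s, 0 < ω j) ∧ ∀ k < m, ∑ j ∈ s, ω j * Pm m y (x j) * x j ^ k = 0 := by
  classical
  have := fun j (hj : j ∈ s) => exists_nodes_through hgap hj
  choose! e he_own he using this
  have hinj : ∀ j ∈ s, Set.InjOn (x ∘ e j) (range (m + 1)) := fun j hj =>
    (strictMonoOn_of_numAbove_add_eq fun r hr => (he j hj r hr).2).injOn.mono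
      fun r hr => Nat.lt_succ_iff.1 (mem_range.1 hr)
  let a (l : ι) : ℝ := ∑ j ∈ s, divDiffWeight m x (e j) l
  refine ⟨fun l => a l / Pm m y (x l), fun l hl => ?_, fun k hk => ?_⟩
  · have hP := Pm_ne_zero_s10 (hxy l hl)
    have : 0 < a l * Pm m y (x l) := by
      rw [sum_mul]
      refine sum_pos' (fun j hj => divDiffWeight_mul_Pm_nonneg (fun r hr => (he j hj r hr).2)
        (fun r hr => hxy _ (he j hj r hr).1) l) ⟨l, hl, ?_⟩
      have := divDiffWeight_mul_Pm_pos (fun r hr => (he l hl r hr).2)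
        (fun r hr => hxy _ (he l hl r hr).1) (Nat.sub_le m (numAbove m y (x l)))
      rwa [he_own l hl] at this
    show 0 < a l / Pm m y (x l)
    rw [← mul_div_mul_right _ _ hP]
    exact div_pos this (mul_self_pos.2 hP)
  · calc ∑ l ∈ s, a l / Pm m y (x l) * Pm m y (x l) * x l ^ k
        = ∑ j ∈ s, ∑ l ∈ s, divDiffWeight m x (e j) l * x l ^ k := by
          rw [sum_comm]
          refine sum_congr rfl fun l hl => ?_
          rw [div_mul_cancel₀ _ (Pm_ne_zero_s10 (hxy l hl)), sum_mul]
      _ = 0 := sum_eq_zero fun j hj => sum_divDiffWeight_mul_pow_eq_zero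
          (fun r hr => (he j hj r hr).1) (hinj j hj) hk

variable {ω : ι → ℝ}

theorem exists_mul_prod_sub_nonpos (hs : s.Nonempty) (hxy : ∀ j ∈ s, ∀ k ∈ Icc 1 m, x j ≠ y k)
    (hω : ∀ j ∈ s, 0 < ω j) (horth : ∀ k < m, ∑ j ∈ s, ω j * Pm m y (x j) * x j ^ k = 0)
    (S : Finset ℕ) (hS : S ⊆ Icc 1 m) (hS0 : S.Nonempty) (c : ℝ) :
    ∃ j ∈ s, c * ∏ k ∈ S, (x j - y k) ≤ 0 := by
  by_contra! h
  set q : ℝ[X] := ∏ k ∈ Icc 1 m \ S, (X - C (y k))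
  have hq_eval : ∀ j, q.eval (x j) = ∏ k ∈ Icc 1 m \ S, (x j - y k) := fun j => by
    simp [q, eval_prod]
  have hq_deg : q.natDegree < m := by
    rw [natDegree_prod_of_monic _ _ fun k _ => monic_X_sub_C (y k)]
    simp only [natDegree_X_sub_C, sum_const, smul_eq_mul, mul_one, card_sdiff_of_subset hS,
      Nat.card_Icc]
    have := hS0.card_pos
    have := card_le_card hS
    simp only [Nat.card_Icc] at this
    omega
  have hzero := sum_mul_eval_eq_zero_of_natDegree_lt s _ x horth hq_deg
  have hpos : 0 < ∑ j ∈ s, ω j * q.eval (x j) ^ 2 * (c * ∏ k ∈ S, (x j - y k)) := by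
    refine sum_pos (fun j hj => mul_pos (mul_pos (hω j hj) (sq_pos_of_ne_zero ?_)) (h j hj)) hs
    rw [hq_eval]
    exact prod_ne_zero_iff.2 fun k hk => sub_ne_zero.2 (hxy j hj k (mem_sdiff.1 hk).1)
  have hPm : ∀ j, Pm m y (x j) = q.eval (x j) * ∏ k ∈ S, (x j - y k) := fun j => by
    rw [hq_eval, Pm, prod_sdiff hS]
  have : ∑ j ∈ s, ω j * q.eval (x j) ^ 2 * (c * ∏ k ∈ S, (x j - y k))
      = c * ∑ j ∈ s, ω j * Pm m y (x j) * q.eval (x j) := by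
    rw [mul_sum]
    exact sum_congr rfl fun j _ => by rw [hPm]; ring
  rw [this, hzero, mul_zero] at hpos
  exact hpos.false

theorem exists_numAbove_add_eq_of_orthogonal (hm : 1 ≤ m) (hy : StrictMonoOn y (Set.Icc 1 m))
    (hs : s.Nonempty) (hxy : ∀ j ∈ s, ∀ k ∈ Icc 1 m, x j ≠ y k) (hω : ∀ j ∈ s, 0 < ω j)
    (horth : ∀ k < m, ∑ j ∈ s, ω j * Pm m y (x j) * x j ^ k = 0) {r : ℕ} (hr : r ≤ m) :
    ∃ j ∈ s, numAbove m y (x j) + r = m := by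
  have hsep := exists_mul_prod_sub_nonpos hs hxy hω horth
  have hmem : ∀ {k}, 1 ≤ k → k ≤ m → k ∈ Icc 1 m := fun h1 h2 => mem_Icc.2 ⟨h1, h2⟩
  rcases Nat.eq_zero_or_pos r with rfl | hr0
  · obtain ⟨j, hj, hle⟩ := hsep {1} (by simpa using hmem le_rfl hm) (singleton_nonempty _) 1
    have hlt : x j < y 1 := lt_of_le_of_ne (by simpa using hle) (hxy j hj 1 (hmem le_rfl hm))
    exact ⟨j, hj, numAbove_add_eq hy (hxy j hj) (Nat.zero_le m) (by omega) fun _ => hlt⟩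
  rcases hr.lt_or_eq with hrm | rfl
  · obtain ⟨j, hj, hle⟩ := hsep {r, r + 1}
      (by simp [insert_subset_iff, hmem hr0 hr, hmem (by omega : 1 ≤ r + 1) hrm])
      (insert_nonempty _ _) 1
    have hyr : y r < y (r + 1) := hy (by simp; omega) (by simp; omega) (Nat.lt_succ_self r)
    have hne₁ := hxy j hj r (hmem hr0 hr)
    have hne₂ := hxy j hj (r + 1) (hmem (by omega) hrm)
    rw [one_mul, prod_pair (by omega)] at hle
    have hlow : y r < x j := by
      by_contra! h
      nlinarith [lt_of_le_of_ne h hne₁]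
    have hhigh : x j < y (r + 1) := by
      by_contra! h
      nlinarith [lt_of_le_of_ne h hne₂.symm]
    exact ⟨j, hj, numAbove_add_eq hy (hxy j hj) hr (fun _ => hlow) fun _ => hhigh⟩
  · obtain ⟨j, hj, hle⟩ := hsep {r} (by simpa using hmem hm le_rfl) (singleton_nonempty _) (-1)
    have hlt : y r < x j := lt_of_le_of_ne (by simpa using hle) (hxy j hj r (hmem hm le_rfl)).symm
    exact ⟨j, hj, numAbove_add_eq hy (hxy j hj) le_rfl (fun _ => hlt) (by omega)⟩

end Orthogonality

section Interlacing

variable {m n : ℕ} {x y : ℕ → ℝ}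

theorem StrictlyInterlacesR.exists_numAbove_add_eq (hx : MonotoneOn x (Set.Icc 1 n))
    (hy : StrictMonoOn y (Set.Icc 1 m)) (hxy : ∀ j ∈ Icc 1 n, ∀ k ∈ Icc 1 m, x j ≠ y k)
    (hI : StrictlyInterlacesR n m x y) {r : ℕ} (hr : r ≤ m) :
    ∃ j ∈ Icc 1 n, numAbove m y (x j) + r = m := by
  obtain ⟨i, -, him, hstep, hbetween⟩ := hI
  have hi_mono : MonotoneOn i (Set.Iic (m + 1)) :=
    (strictMonoOn_Iic_of_lt_succ fun r hr => hstep r (by omega)).monotoneOn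
  have hle : i (r + 1) ≤ n := him ▸ hi_mono (by simp; omega) (by simp) (by omega)
  have hj : i r + 1 ∈ Icc 1 n := mem_Icc.2 ⟨by omega, (hstep r hr).trans_le hle⟩
  refine ⟨i r + 1, hj, numAbove_add_eq hy (hxy _ hj) hr (fun h1 => (hbetween r h1 hr).2)
    fun hrm => ?_⟩
  refine lt_of_le_of_lt ?_ (hbetween (r + 1) (by omega) hrm).1
  exact hx (mem_Icc.1 hj) ⟨(Nat.zero_le _).trans_lt (hstep r hr), hle⟩ (hstep r hr)

theorem strictlyInterlacesR_of_forall_exists_numAbove_add_eq (hx : MonotoneOn x (Set.Icc 1 n))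
    (hy : StrictMonoOn y (Set.Icc 1 m)) (hxy : ∀ j ∈ Icc 1 n, ∀ k ∈ Icc 1 m, x j ≠ y k)
    (hgap : ∀ r ≤ m, ∃ j ∈ Icc 1 n, numAbove m y (x j) + r = m) :
    StrictlyInterlacesR n m x y := by
  -- for `1 ≤ k ≤ m`, `i k` is the last `j` with `x j < y k`
  let i (k : ℕ) : ℕ := Nat.findGreatest (fun l => m + 1 ≤ numAbove m y (x l) + k) n
  have hi : ∀ k, ∀ l ∈ Icc 1 n, l ≤ i k ↔ m + 1 ≤ numAbove m y (x l) + k := by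
    intro k l hl
    have hl' := mem_Icc.1 hl
    refine ⟨fun hle => ?_, fun h =>
      Nat.le_findGreatest (P := fun l => m + 1 ≤ numAbove m y (x l) + k) hl'.2 h⟩
    have hik : m + 1 ≤ numAbove m y (x (i k)) + k :=
      Nat.findGreatest_of_ne_zero (P := fun l => m + 1 ≤ numAbove m y (x l) + k) rfl (by omega)
    have hikn : i k ≤ n := Nat.findGreatest_le n
    have : numAbove m y (x (i k)) ≤ numAbove m y (x l) :=
      numAbove_antitone (hx hl' ⟨hl'.1.trans hle, hikn⟩ hle)
    omega
  have hi_step : ∀ r ≤ m, i r < i (r + 1) := fun r hr => by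
    obtain ⟨j, hj, hjr⟩ := hgap r hr
    have := (hi (r + 1) j hj).2 (by omega)
    have := (hi r j hj).not.2 (by omega)
    omega
  refine ⟨i, Nat.findGreatest_eq_zero_iff.2 fun l _ _ => ?_, Nat.findGreatest_eq (by omega),
    hi_step, fun k hk1 hkm => ?_⟩
  · have := numAbove_le (m := m) (y := y) (x l)
    omega
  obtain ⟨j₀, hj₀, hN₀⟩ := hgap 0 (Nat.zero_le m)
  obtain ⟨j₁, hj₁, hN₁⟩ := hgap m le_rfl
  have h₀ := (hi k j₀ hj₀).2 (by omega)
  have h₁ := (hi k j₁ hj₁).not.2 (by omega)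
  have hik : i k ∈ Icc 1 n := mem_Icc.2 ⟨by simp at hj₀; omega, by simp at hj₁; omega⟩
  have hik' : i k + 1 ∈ Icc 1 n := mem_Icc.2 ⟨by omega, by simp at hj₁; omega⟩
  have hk := mem_Icc.2 ⟨hk1, hkm⟩
  refine ⟨(lt_iff_le_numAbove_add hy (hxy _ hik) hk).2 ((hi k _ hik).1 le_rfl), ?_⟩
  refine lt_of_le_of_ne (not_lt.1 fun hlt => ?_) (hxy _ hik' k hk).symm
  exact absurd ((hi k _ hik').2 ((lt_iff_le_numAbove_add hy (hxy _ hik') hk).1 hlt)) (by omega)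

end Interlacing

/-- there exists a positive Borel measure `μ = ∑_{j=1}^n ω_j δ_{x_j}` on `ℝ`
with all `ω_j > 0` such that `∫ P_m(t) t^k dμ(t) = 0` for every `k = 0,…,m-1`, if and only
if `{y_k}_{k=1}^m` strictly interlaces `{x_j}_{j=1}^n`. -/
theorem stmt_10 (m n : ℕ) (hm : 1 ≤ m) (hmn : m < n)
    (x y : ℕ → ℝ)
    (hx : ∀ j j', 1 ≤ j → j < j' → j' ≤ n → x j < x j')
    (hy : ∀ k k', 1 ≤ k → k < k' → k' ≤ m → y k < y k')
    (hxy : ∀ j k, 1 ≤ j → j ≤ n → 1 ≤ k → k ≤ m → x j ≠ y k) :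
    (∃ ω : ℕ → ℝ, (∀ j, 1 ≤ j → j ≤ n → 0 < ω j) ∧
      ∀ k, k < m →
        ∫ t, Pm m y t * t ^ k
          ∂(∑ j ∈ Finset.Icc 1 n, ENNReal.ofReal (ω j) • Measure.dirac (x j)) = 0)
    ↔ StrictlyInterlacesR n m x y := by
  have hx' : MonotoneOn x (Set.Icc 1 n) :=
    StrictMonoOn.monotoneOn fun a ha b hb hab => hx a b ha.1 hab hb.2
  have hy' : StrictMonoOn y (Set.Icc 1 m) := fun a ha b hb hab => hy a b ha.1 hab hb.2
  have hxy' : ∀ j ∈ Icc 1 n, ∀ k ∈ Icc 1 m, x j ≠ y k := fun j hj k hk =>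
    hxy j k (mem_Icc.1 hj).1 (mem_Icc.1 hj).2 (mem_Icc.1 hk).1 (mem_Icc.1 hk).2
  have hintegral (ω : ℕ → ℝ) (hω : ∀ j ∈ Icc 1 n, 0 < ω j) (k : ℕ) :
      ∫ t, Pm m y t * t ^ k ∂(∑ j ∈ Icc 1 n, ENNReal.ofReal (ω j) • Measure.dirac (x j))
        = ∑ j ∈ Icc 1 n, ω j * Pm m y (x j) * x j ^ k := by
    simp_rw [integral_sum_smul_dirac _ (fun j hj => (hω j hj).le), mul_assoc]
  constructor
  · rintro ⟨ω, hω, horth⟩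
    have hω' : ∀ j ∈ Icc 1 n, 0 < ω j := fun j hj => hω j (mem_Icc.1 hj).1 (mem_Icc.1 hj).2
    refine strictlyInterlacesR_of_forall_exists_numAbove_add_eq hx' hy' hxy' fun r hr => ?_
    exact exists_numAbove_add_eq_of_orthogonal hm hy' ⟨1, mem_Icc.2 ⟨le_rfl, by omega⟩⟩ hxy' hω'
      (fun k hk => hintegral ω hω' k ▸ horth k hk) hr
  · intro hI
    obtain ⟨ω, hω, horth⟩ := exists_pos_weights_orthogonal hxy' fun r hr =>
      hI.exists_numAbove_add_eq hx' hy' hxy' hr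
    exact ⟨ω, fun j h1 h2 => hω j (mem_Icc.2 ⟨h1, h2⟩),
      fun k hk => (hintegral ω hω k).trans (horth k hk)⟩
end

section
/- For every subset J ⊆ {1,…,n} with |J| = m, the real circuit vector ω^{(J)} is well defined (its denominators are nonzero), ω^{(J)} ≠ 0, and ω^{(J)} solves the circle Vandermonde-type system, i.e. ∑_{j=1}^n ω^{(J)}_j · Ψ_m(ζ_j) · ζ_j^{−k} = 0 for every k = 1,…,m−1. -/
open Complex Finset Polynomial

/-- Monotone chain for a sequence increasing on `[1, N]`. -/
lemma chain_lt (f : ℕ → ℝ) (N : ℕ) (h : ∀ j, 1 ≤ j → j < N → f j < f (j + 1)) :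
    ∀ a b, 1 ≤ a → a < b → b ≤ N → f a < f b := by
  intro a b ha hab hbN
  induction b with
  | zero => omega
  | succ c ih =>
    rcases Nat.lt_or_ge a c with hc | hc
    · exact lt_trans (ih hc (by omega)) (h c (by omega) (by omega))
    · have : a = c := by omega
      subst this
      exact h a ha (by omega)

lemma sin_half_ne_zero {x : ℝ} (h0 : x ≠ 0) (h1 : -(2 * Real.pi) < x) (h2 : x < 2 * Real.pi) :
    Real.sin (x / 2) ≠ 0 := by
  rcases lt_or_gt_of_ne h0 with hx | hx
  · have : Real.sin (-(x / 2)) > 0 := by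
      apply Real.sin_pos_of_pos_of_lt_pi <;> nlinarith
    rw [Real.sin_neg] at this; linarith
  · have : Real.sin (x / 2) > 0 := by
      apply Real.sin_pos_of_pos_of_lt_pi <;> nlinarith
    linarith

lemma exp_sub_exp' (x y : ℝ) :
    Complex.exp (Complex.I * x) - Complex.exp (Complex.I * y) =
      Complex.exp (Complex.I * (((x + y) / 2 : ℝ))) *
        (2 * Complex.I * (Real.sin ((x - y) / 2) : ℂ)) := by
  rw [Complex.ofReal_sin, Complex.sin]
  have h2 : Complex.I * (((x + y) / 2 : ℝ)) + ((((x - y) / 2 : ℝ) : ℂ) * Complex.I) =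
      Complex.I * x := by push_cast; ring
  have h1 : Complex.I * (((x + y) / 2 : ℝ)) + (-((((x - y) / 2 : ℝ)) : ℂ) * Complex.I) =
      Complex.I * y := by push_cast; ring
  calc Complex.exp (Complex.I * x) - Complex.exp (Complex.I * y)
      = Complex.exp (Complex.I * (((x + y) / 2 : ℝ))) *
          (Complex.exp ((((x - y) / 2 : ℝ) : ℂ) * Complex.I) -
           Complex.exp (-((((x - y) / 2 : ℝ)) : ℂ) * Complex.I)) := by
        rw [mul_sub, ← Complex.exp_add, ← Complex.exp_add, h2, h1]
  _ = _ := by ring_nf; rw [Complex.I_sq]; ring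

lemma prod_exp_sub {ι : Type*} (F : Finset ι) (x : ℝ) (a : ι → ℝ) :
    ∏ i ∈ F, (Complex.exp (Complex.I * x) - Complex.exp (Complex.I * (a i))) =
      (2 * Complex.I) ^ F.card *
        Complex.exp (Complex.I * ((∑ i ∈ F, (x + a i) / 2 : ℝ))) *
        ((∏ i ∈ F, Real.sin ((x - a i) / 2) : ℝ) : ℂ) := by
  rw [Finset.prod_congr rfl (fun i (_ : i ∈ F) => exp_sub_exp' x (a i))]
  rw [Finset.prod_mul_distrib, ← Complex.exp_sum, Finset.prod_mul_distrib, Finset.prod_const,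
    Complex.ofReal_prod]
  have : ∑ i ∈ F, Complex.I * (((x + a i) / 2 : ℝ)) =
      Complex.I * ((∑ i ∈ F, (x + a i) / 2 : ℝ)) := by
    rw [← Finset.mul_sum]; push_cast; ring
  rw [this]; ring

lemma key_lagrange {ι : Type*} [DecidableEq ι] (s : Finset ι) (v : ι → ℂ)
    (hv : Set.InjOn v s) (d : ℕ) (hd : d + 1 < s.card) :
    ∑ i ∈ s, (v i) ^ d * (∏ j ∈ s.erase i, (v i - v j))⁻¹ = 0 := by
  have hdeg : ((Polynomial.X : ℂ[X]) ^ d).degree < s.card := by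
    rw [Polynomial.degree_X_pow]
    exact_mod_cast Nat.lt_of_succ_lt hd
  have h := Lagrange.eq_interpolate hv hdeg
  have hcoeff := congrArg (fun p : ℂ[X] => p.coeff (s.card - 1)) h
  simp only [Lagrange.interpolate_apply, Polynomial.finset_sum_coeff,
    Polynomial.coeff_C_mul, Polynomial.coeff_X_pow] at hcoeff
  have hne : s.card - 1 ≠ d := by omega
  rw [if_neg hne] at hcoeff
  have hbasis : ∀ i ∈ s, (Lagrange.basis s v i).coeff (s.card - 1) =
      (∏ j ∈ s.erase i, (v i - v j))⁻¹ := by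
    intro i hi
    have hnd := Lagrange.natDegree_basis hv hi
    have h0 : (Lagrange.basis s v i).coeff (s.card - 1) = (Lagrange.basis s v i).leadingCoeff := by
      rw [Polynomial.leadingCoeff, hnd]
    rw [h0, Lagrange.basis, Polynomial.leadingCoeff_prod, ← Finset.prod_inv_distrib]
    refine Finset.prod_congr rfl fun j hj => ?_
    rw [Lagrange.basisDivisor, Polynomial.leadingCoeff_mul, Polynomial.leadingCoeff_C,
      (Polynomial.monic_X_sub_C (v j)).leadingCoeff, mul_one]
  calc ∑ i ∈ s, (v i) ^ d * (∏ j ∈ s.erase i, (v i - v j))⁻¹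
      = ∑ i ∈ s, Polynomial.eval (v i) ((Polynomial.X : ℂ[X]) ^ d) *
          (Lagrange.basis s v i).coeff (s.card - 1) := by
        refine Finset.sum_congr rfl fun i hi => ?_
        rw [hbasis i hi, Polynomial.eval_pow, Polynomial.eval_X]
  _ = 0 := hcoeff.symm

lemma combine_exp {P Q : ℂ} (hP : P ≠ 0) (hQ : Q ≠ 0) {c : ℂ} (hc : c ≠ 0) (m1 m2 : ℕ)
    {a1 a2 a3 a4 a5 : ℂ} (h : a1 + a2 + a5 = a3 + a4) :
    (P * Q)⁻¹ * (c ^ m1 * Complex.exp a1 * P) * Complex.exp a2 =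
      c ^ (m1 + m2) * Complex.exp a3 * (Complex.exp a4 * (c ^ m2 * Complex.exp a5 * Q)⁻¹) := by
  have he : ∀ z : ℂ, Complex.exp z ≠ 0 := Complex.exp_ne_zero
  field_simp [pow_add]
  have hkey : Complex.exp a1 * Complex.exp a2 * Complex.exp a5 =
      Complex.exp a3 * Complex.exp a4 := by
    rw [← Complex.exp_add, ← Complex.exp_add, h, Complex.exp_add]
  linear_combination (c ^ m1 * c ^ m2) * hkey

/-- The node `ζ_j = e^{iθ_j}` on the unit circle. -/
noncomputable def zetaC (θ : ℕ → ℝ) (j : ℕ) : ℂ := Complex.exp (Complex.I * (θ j : ℂ))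

/-- `Ψ_m(z) = ∏_{k=1}^m (z - ξ_k)` with `ξ_k = e^{iφ_k}` (1-based indexing). -/
noncomputable def PsiC (m : ℕ) (φ : ℕ → ℝ) (z : ℂ) : ℂ :=
  ∏ k ∈ Finset.Icc 1 m, (z - Complex.exp (Complex.I * (φ k : ℂ)))

/-- The real circuit vector `ω^{(J)} ∈ ℝⁿ` on the circle:
`ω^{(J)}_j = 1/(∏_{k=1}^m sin((θ_j - φ_k)/2) · ∏_{j' ∈ J, j' ≠ j} sin((θ_j - θ_{j'})/2))`
if `j ∈ J`, else `0`. (Coordinate `j : Fin n` corresponds to the 1-based index `j+1`.) -/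
noncomputable def circuitC (n m : ℕ) (θ φ : ℕ → ℝ) (J : Finset (Fin n)) : Fin n → ℝ :=
  fun j => if j ∈ J then
    1 / ((∏ k ∈ Finset.Icc 1 m, Real.sin ((θ ((j : ℕ) + 1) - φ k) / 2)) *
      ∏ j' ∈ J.erase j, Real.sin ((θ ((j : ℕ) + 1) - θ ((j' : ℕ) + 1)) / 2))
  else 0

/-- for every `J ⊆ {1,…,n}` with `|J| = m`, the circuit vector `ω^{(J)}` is
well defined (nonzero denominators), nonzero, and solves the circle Vandermonde-type system
`∑_j ω^{(J)}_j Ψ_m(ζ_j) ζ_j^{-k} = 0` for `k = 1,…,m-1`. -/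
theorem stmt_13 (m n : ℕ) (hm : 1 ≤ m) (hmn : m < n)
    (θ φ : ℕ → ℝ)
    (hφ : ∀ k, 1 ≤ k → k ≤ m → φ k < φ (k + 1))
    (hφp : φ (m + 1) = φ 1 + 2 * Real.pi)
    (hθ1 : φ 1 < θ 1)
    (hθ : ∀ j, 1 ≤ j → j < n → θ j < θ (j + 1))
    (hθn : θ n < φ 1 + 2 * Real.pi)
    (hθφ : ∀ j k, 1 ≤ j → j ≤ n → 1 ≤ k → k ≤ m → θ j ≠ φ k)
    (J : Finset (Fin n)) (hJ : J.card = m) :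
    (∀ j ∈ J,
      (∏ k ∈ Finset.Icc 1 m, Real.sin ((θ ((j : ℕ) + 1) - φ k) / 2)) *
        ∏ j' ∈ J.erase j, Real.sin ((θ ((j : ℕ) + 1) - θ ((j' : ℕ) + 1)) / 2) ≠ 0) ∧
    circuitC n m θ φ J ≠ 0 ∧
    (∀ k : ℕ, 1 ≤ k → k < m →
      ∑ j : Fin n, (circuitC n m θ φ J j : ℂ) *
        PsiC m φ (zetaC θ ((j : ℕ) + 1)) * zetaC θ ((j : ℕ) + 1) ^ (-(k : ℤ)) = 0) := by
  have hπ := Real.pi_pos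
  have chθ := chain_lt θ n hθ
  have chφ := chain_lt φ (m + 1) (fun k hk1 hk2 => hφ k hk1 (by omega))
  -- bounds for the θ-nodes
  have htmem : ∀ j : Fin n, φ 1 < θ ((j : ℕ) + 1) ∧ θ ((j : ℕ) + 1) < φ 1 + 2 * Real.pi := by
    intro j
    have hjn : (j : ℕ) < n := j.isLt
    have h1 : θ 1 ≤ θ ((j : ℕ) + 1) := by
      rcases Nat.lt_or_ge 1 ((j : ℕ) + 1) with h | h
      · exact le_of_lt (chθ 1 _ le_rfl h (by omega))
      · have : (j : ℕ) + 1 = 1 := by omega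
        rw [this]
    have h2 : θ ((j : ℕ) + 1) ≤ θ n := by
      rcases Nat.lt_or_ge ((j : ℕ) + 1) n with h | h
      · exact le_of_lt (chθ _ n (by omega) h le_rfl)
      · have : (j : ℕ) + 1 = n := by omega
        rw [this]
    exact ⟨lt_of_lt_of_le hθ1 h1, lt_of_le_of_lt h2 hθn⟩
  -- bounds for the φ-nodes
  have hφmem : ∀ k, 1 ≤ k → k ≤ m → φ 1 ≤ φ k ∧ φ k < φ 1 + 2 * Real.pi := by
    intro k hk1 hk2
    constructor
    · rcases Nat.lt_or_ge 1 k with h | h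
      · exact le_of_lt (chφ 1 k le_rfl h (by omega))
      · have : k = 1 := by omega
        rw [this]
    · rw [← hφp]
      exact chφ k (m + 1) hk1 (by omega) le_rfl
  -- sines are nonzero
  have hsinφ : ∀ (j : Fin n), ∀ k ∈ Finset.Icc 1 m,
      Real.sin ((θ ((j : ℕ) + 1) - φ k) / 2) ≠ 0 := by
    intro j k hk
    rw [Finset.mem_Icc] at hk
    obtain ⟨a1, a2⟩ := htmem j
    obtain ⟨b1, b2⟩ := hφmem k hk.1 hk.2
    refine sin_half_ne_zero (sub_ne_zero_of_ne ?_) (by linarith) (by linarith)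
    exact hθφ ((j : ℕ) + 1) k (by omega) (by omega) hk.1 hk.2
  have htinj : ∀ j j' : Fin n, j ≠ j' → θ ((j : ℕ) + 1) ≠ θ ((j' : ℕ) + 1) := by
    intro j j' hne
    rcases lt_trichotomy (j : ℕ) (j' : ℕ) with h | h | h
    · exact ne_of_lt (chθ _ _ (by omega) (by omega) (by omega))
    · exact absurd (Fin.ext h) hne
    · exact (ne_of_lt (chθ _ _ (by omega) (by omega) (by omega))).symm
  have hsinθ : ∀ j j' : Fin n, j ≠ j' →
      Real.sin ((θ ((j : ℕ) + 1) - θ ((j' : ℕ) + 1)) / 2) ≠ 0 := by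
    intro j j' hne
    obtain ⟨a1, a2⟩ := htmem j
    obtain ⟨b1, b2⟩ := htmem j'
    exact sin_half_ne_zero (sub_ne_zero_of_ne (htinj j j' hne)) (by linarith) (by linarith)
  -- part 1
  have hPQ : ∀ j ∈ J,
      (∏ k ∈ Finset.Icc 1 m, Real.sin ((θ ((j : ℕ) + 1) - φ k) / 2)) *
        ∏ j' ∈ J.erase j, Real.sin ((θ ((j : ℕ) + 1) - θ ((j' : ℕ) + 1)) / 2) ≠ 0 := by
    intro j hj
    refine mul_ne_zero (Finset.prod_ne_zero_iff.mpr (hsinφ j))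
      (Finset.prod_ne_zero_iff.mpr fun j' hj' => ?_)
    exact hsinθ j j' (Finset.mem_erase.mp hj').1.symm
  have hJne : J.Nonempty := Finset.card_pos.mp (by omega)
  obtain ⟨j0, hj0⟩ := hJne
  refine ⟨hPQ, ?_, ?_⟩
  · intro hzero
    have h0 := congrFun hzero j0
    simp only [circuitC, if_pos hj0, Pi.zero_apply, one_div, inv_eq_zero] at h0
    exact hPQ j0 hj0 h0
  -- part 3
  intro k hk1 hkm
  obtain ⟨d, hd⟩ : ∃ d, m = k + d + 1 := ⟨m - k - 1, by omega⟩
  set v : Fin n → ℂ := fun j => Complex.exp (Complex.I * (θ ((j : ℕ) + 1) : ℂ)) with hv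
  have hvsub : ∀ j j' : Fin n, j ≠ j' → v j - v j' ≠ 0 := by
    intro j j' hne
    rw [hv]
    simp only
    rw [exp_sub_exp']
    exact mul_ne_zero (Complex.exp_ne_zero _)
      (mul_ne_zero (mul_ne_zero two_ne_zero Complex.I_ne_zero)
        (Complex.ofReal_ne_zero.mpr (hsinθ j j' hne)))
  have hvinj : Set.InjOn v (J : Set (Fin n)) := by
    intro a _ b _ hab
    by_contra hne
    exact hvsub a b hne (sub_eq_zero.mpr hab)
  have key := key_lagrange J v hvinj d (by omega)
  have h2I : (2 * Complex.I) ≠ 0 := mul_ne_zero two_ne_zero Complex.I_ne_zero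
  -- constants
  set S : ℝ := ∑ kk ∈ Finset.Icc 1 m, φ kk with hS
  set T : ℝ := ∑ j' ∈ J, θ ((j' : ℕ) + 1) with hT
  set C : ℂ := (2 * Complex.I) ^ (m + (m - 1)) *
    Complex.exp (Complex.I * ((((S + T) / 2 : ℝ)) : ℂ)) with hC
  -- restrict the sum to J
  rw [← Finset.sum_subset (Finset.subset_univ J) (fun j _ hjJ => by
    simp [circuitC, hjJ])]
  -- per-term computation
  have perterm : ∀ j ∈ J,
      (circuitC n m θ φ J j : ℂ) * PsiC m φ (zetaC θ ((j : ℕ) + 1)) *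
          zetaC θ ((j : ℕ) + 1) ^ (-(k : ℤ)) =
        C * (v j ^ d * (∏ j' ∈ J.erase j, (v j - v j'))⁻¹) := by
    intro j hj
    have hjn : (j : ℕ) < n := j.isLt
    set x : ℝ := θ ((j : ℕ) + 1) with hx
    set P : ℝ := ∏ kk ∈ Finset.Icc 1 m, Real.sin ((x - φ kk) / 2) with hP
    set Q : ℝ := ∏ j' ∈ J.erase j, Real.sin ((x - θ ((j' : ℕ) + 1)) / 2) with hQ
    have hPne : (P : ℂ) ≠ 0 :=
      Complex.ofReal_ne_zero.mpr (Finset.prod_ne_zero_iff.mpr (hsinφ j))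
    have hQne : (Q : ℂ) ≠ 0 :=
      Complex.ofReal_ne_zero.mpr (Finset.prod_ne_zero_iff.mpr fun j' hj' =>
        hsinθ j j' (Finset.mem_erase.mp hj').1.symm)
    have hcard : (J.erase j).card = m - 1 := by rw [Finset.card_erase_of_mem hj, hJ]
    have hω : ((circuitC n m θ φ J j : ℝ) : ℂ) = ((P : ℂ) * (Q : ℂ))⁻¹ := by
      simp only [circuitC, if_pos hj, one_div, ← hx, ← hP, ← hQ]
      push_cast
      ring
    set A : ℝ := ∑ kk ∈ Finset.Icc 1 m, (x + φ kk) / 2 with hA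
    set B : ℝ := ∑ j' ∈ J.erase j, (x + θ ((j' : ℕ) + 1)) / 2 with hB
    have hPsi : PsiC m φ (zetaC θ ((j : ℕ) + 1)) =
        (2 * Complex.I) ^ m * Complex.exp (Complex.I * (A : ℂ)) * (P : ℂ) := by
      have := prod_exp_sub (Finset.Icc 1 m) x φ
      rw [Nat.card_Icc] at this
      simpa [PsiC, zetaC, ← hx, ← hA, ← hP] using this
    have hD : ∏ j' ∈ J.erase j, (v j - v j') =
        (2 * Complex.I) ^ (m - 1) * Complex.exp (Complex.I * (B : ℂ)) * (Q : ℂ) := by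
      have := prod_exp_sub (J.erase j) x (fun j' : Fin n => θ ((j' : ℕ) + 1))
      rw [hcard] at this
      simpa [hv, ← hx, ← hB, ← hQ] using this
    have hzeta : zetaC θ ((j : ℕ) + 1) = Complex.exp (Complex.I * (x : ℂ)) := rfl
    have hzpow : zetaC θ ((j : ℕ) + 1) ^ (-(k : ℤ)) =
        Complex.exp (((-(k : ℤ) : ℤ) : ℂ) * (Complex.I * (x : ℂ))) := by
      rw [hzeta, Complex.exp_int_mul]
    have hvd : v j ^ d = Complex.exp ((d : ℂ) * (Complex.I * (x : ℂ))) := by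
      rw [hv]
      simp only
      rw [← hx, Complex.exp_nat_mul]
    -- the exponent identity
    have hAval : A = ((m : ℝ) * x + S) / 2 := by
      rw [hA, ← Finset.sum_div, Finset.sum_add_distrib, Finset.sum_const, Nat.card_Icc,
        nsmul_eq_mul, hS]
      push_cast
      ring
    have hBval : B = (((m : ℝ) - 1) * x + (T - x)) / 2 := by
      rw [hB, ← Finset.sum_div, Finset.sum_add_distrib, Finset.sum_const, hcard,
        nsmul_eq_mul, Finset.sum_erase_eq_sub hj, ← hT, ← hx, Nat.cast_sub hm]
      push_cast
      ring
    have hmr : (m : ℝ) = (k : ℝ) + (d : ℝ) + 1 := by exact_mod_cast hd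
    have hsum : Complex.I * (A : ℂ) + ((-(k : ℤ) : ℤ) : ℂ) * (Complex.I * (x : ℂ)) +
        Complex.I * (B : ℂ) =
        Complex.I * ((((S + T) / 2 : ℝ)) : ℂ) + (d : ℂ) * (Complex.I * (x : ℂ)) := by
      rw [hAval, hBval]
      have hmc : ((m : ℕ) : ℂ) = (k : ℂ) + (d : ℂ) + 1 := by exact_mod_cast hd
      push_cast
      rw [hmc]
      ring
    rw [hω, hPsi, hzpow, hvd, hD, hC]
    exact combine_exp hPne hQne h2I m (m - 1) hsum
  calc ∑ j ∈ J, (circuitC n m θ φ J j : ℂ) * PsiC m φ (zetaC θ ((j : ℕ) + 1)) *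
        zetaC θ ((j : ℕ) + 1) ^ (-(k : ℤ))
      = ∑ j ∈ J, C * (v j ^ d * (∏ j' ∈ J.erase j, (v j - v j'))⁻¹) :=
        Finset.sum_congr rfl perterm
  _ = C * ∑ j ∈ J, v j ^ d * (∏ j' ∈ J.erase j, (v j - v j'))⁻¹ := (Finset.mul_sum _ _ _).symm
  _ = 0 := by rw [key, mul_zero]
end
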